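/- arXiv:2306.14187 — 8 statements merged into one kernel-verified Lean document; each statement's English description precedes it below -/
import Mathlib

section
/- Let n ≥ 2 be an integer, p real with 1 < p < n, λ ∈ [0, ((n−1)/p)^p), and let α_λ be the unique root of α^(p−1)(n−1−(p−1)α) = λ in ((n−1)/p,(n−1)/(p−1)]. For any real m ≥ 2 define v(t) = (cosh(t/m))^(−m·α_λ) for t > 0. Then there exist constants R > 0 and c > 0 such that for all t > R, −|v′(t)|^(p−2) · ( (p−1)·v″(t) + (n−1)·coth(t)·v′(t) ) − λ·v(t)^(p−1) ≥ c·e^(−2t/m)·v(t)^(p−1). (Equivalently, the radial function x ↦ v(dist(0,x)) is a supersolution of −Δ_p^{𝔹ⁿ} v − λ v^(p−1) ≥ c e^{−(2/m)dist(0,x)} v^(p−1) outside a large hyperbolic ball.) -/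
open Real

private lemma fcore (N p a m lam : ℝ) (hp1 : 1 < p) (ha0 : 0 < a) (hm : 0 < m)
    (hpa : N < p * a)
    (hF1 : a ^ (p-1) * (N - (p-1)*a) = lam) :
    ∃ δ : ℝ, 0 < δ ∧ δ ≤ 1/2 ∧ ∃ c > 0, ∀ s : ℝ, 1 - δ < s → s < 1 →
      a^(p-2) * (N*a*s^(p-1) - (p-1)*(a*a)*s^p + (p-1)*(a/m)*(s^(p-2) - s^p)) - lam
        ≥ c * (1 - s) := by
  set F : ℝ → ℝ := fun s =>
    a^(p-2) * (N*a*s^(p-1) - (p-1)*(a*a)*s^p + (p-1)*(a/m)*(s^(p-2) - s^p)) with hF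
  set F' : ℝ → ℝ := fun s =>
    a^(p-2) * (N*a*((p-1)*s^(p-2)) - (p-1)*(a*a)*(p*s^(p-1))
      + (p-1)*(a/m)*((p-2)*s^(p-3) - p*s^(p-1))) with hF'
  have hA : a^(p-2) * a = a^(p-1) := by
    rw [← Real.rpow_add_one ha0.ne' (p-2)]; ring_nf
  set c : ℝ := (p-1)*a^(p-1)*(p*a - N + 2/m)/2 with hc
  have hc0 : 0 < c := by
    have h1 : 0 < a^(p-1) := Real.rpow_pos_of_pos ha0 _
    have h2 : 0 < 2/m := by positivity
    have : 0 < p*a - N + 2/m := by linarith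
    have : 0 < (p-1)*a^(p-1)*(p*a - N + 2/m) := by
      apply mul_pos (mul_pos (by linarith) h1) this
    rw [hc]; linarith
  -- F' 1 = -(2*c)
  have hF'1 : F' 1 = -(2*c) := by
    simp only [hF', hc, Real.one_rpow]
    rw [← hA]
    field_simp
    ring
  -- derivative of F at s > 0
  have hder : ∀ s : ℝ, 0 < s → HasDerivAt F (F' s) s := by
    intro s hs
    have h1 : HasDerivAt (fun x : ℝ => x^(p-1)) ((p-1)*s^(p-2)) s := by
      have := Real.hasDerivAt_rpow_const (x := s) (p := p-1) (Or.inl hs.ne')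
      simpa [show p-1-1 = p-2 by ring] using this
    have h2 : HasDerivAt (fun x : ℝ => x^p) (p*s^(p-1)) s := by
      simpa using Real.hasDerivAt_rpow_const (x := s) (p := p) (Or.inl hs.ne')
    have h3 : HasDerivAt (fun x : ℝ => x^(p-2)) ((p-2)*s^(p-3)) s := by
      have := Real.hasDerivAt_rpow_const (x := s) (p := p-2) (Or.inl hs.ne')
      simpa [show p-2-1 = p-3 by ring] using this
    have : HasDerivAt (fun x : ℝ =>
        a^(p-2) * (N*a*x^(p-1) - (p-1)*(a*a)*x^p + (p-1)*(a/m)*(x^(p-2) - x^p)))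
        (a^(p-2) * (N*a*((p-1)*s^(p-2)) - (p-1)*(a*a)*(p*s^(p-1))
          + (p-1)*(a/m)*((p-2)*s^(p-3) - p*s^(p-1)))) s := by
      exact (((h1.const_mul (N*a)).sub (h2.const_mul ((p-1)*(a*a)))).add
        ((h3.sub h2).const_mul ((p-1)*(a/m)))).const_mul (a^(p-2))
    exact this
  -- continuity of F' at 1
  have hcont : ContinuousAt F' 1 := by
    have hq : ∀ q : ℝ, ContinuousAt (fun x : ℝ => x^q) 1 := fun q =>
      Real.continuousAt_rpow_const 1 q (Or.inl one_ne_zero)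
    exact (((((hq (p-2)).const_mul _).const_mul _).sub
      (((hq (p-1)).const_mul _).const_mul _)).add
      ((((hq (p-3)).const_mul _).sub ((hq (p-1)).const_mul _)).const_mul _)).const_mul _
  have hev : ∀ᶠ s in nhds 1, F' s < -c := by
    have h : F' 1 < -c := by rw [hF'1]; linarith
    exact hcont.eventually_lt_const h
  -- pick δ
  obtain ⟨ε, hε, hball⟩ := Metric.eventually_nhds_iff.mp hev
  set δ : ℝ := min (ε/2) (1/2) with hδ
  have hδ0 : 0 < δ := lt_min (by linarith) (by norm_num)
  have hδhalf : δ ≤ 1/2 := min_le_right _ _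
  refine ⟨δ, hδ0, hδhalf, c, hc0, fun s hs1 hs2 => ?_⟩
  -- the function G
  set G : ℝ → ℝ := fun x => F x + c * x with hG
  have hGder : ∀ x : ℝ, 0 < x → HasDerivAt G (F' x + c) x := by
    intro x hx
    have := (hder x hx).add ((hasDerivAt_id x).const_mul c)
    rw [mul_one] at this
    exact this
  have hanti : StrictAntiOn G (Set.Icc (1-δ) 1) := by
    apply strictAntiOn_of_deriv_neg (convex_Icc _ _)
    · intro x hx
      have hx0 : 0 < x := by
        have := hx.1; simp only [Set.mem_Icc] at hx; nlinarith [hx.1, hδhalf]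
      exact (hGder x hx0).differentiableAt.continuousAt.continuousWithinAt
    · intro x hx
      rw [interior_Icc] at hx
      have hx0 : 0 < x := by nlinarith [hx.1, hδhalf]
      rw [(hGder x hx0).deriv]
      have : F' x < -c := hball (by
        rw [Real.dist_eq, abs_lt]
        constructor <;> nlinarith [hx.1, hx.2, min_le_left (ε/2) (1/2), hδ])
      linarith
  have hmem1 : s ∈ Set.Icc (1-δ) 1 := ⟨le_of_lt hs1, le_of_lt hs2⟩
  have hmem2 : (1:ℝ) ∈ Set.Icc (1-δ) 1 := ⟨by linarith, le_refl _⟩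
  have hGs : G 1 < G s := hanti hmem1 hmem2 hs2
  have hFone : F 1 = lam := by
    simp only [hF, Real.one_rpow]
    rw [← hF1, ← hA]; ring
  have : F 1 + c * 1 < F s + c * s := hGs
  rw [hFone] at this
  show F s - lam ≥ c * (1 - s)
  linarith

private lemma tanh_bounds (x : ℝ) (hx : 0 ≤ x) :
    Real.exp (-(2*x)) ≤ 1 - Real.tanh x ∧ 1 - Real.tanh x ≤ 2 * Real.exp (-(2*x)) := by
  have hE0 : 0 < Real.exp (-x) := Real.exp_pos _
  have hP0 : 0 < Real.exp x := Real.exp_pos _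
  have hEP : Real.exp (-x) * Real.exp x = 1 := by
    rw [← Real.exp_add]; simp
  have hE1 : Real.exp (-x) ≤ 1 := Real.exp_le_one_iff.mpr (by linarith)
  have hE2 : Real.exp (-(2*x)) = Real.exp (-x) * Real.exp (-x) := by
    rw [← Real.exp_add]; congr 1; ring
  have hden : 0 < Real.exp x + Real.exp (-x) := by positivity
  have h1 : 1 - Real.tanh x = 2 * Real.exp (-x) / (Real.exp x + Real.exp (-x)) := by
    rw [Real.tanh_eq_sinh_div_cosh, Real.sinh_eq, Real.cosh_eq]
    field_simp
    ring
  constructor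
  · rw [h1, hE2, le_div_iff₀ hden]
    nlinarith
  · rw [h1, hE2, div_le_iff₀ hden]
    nlinarith

private lemma wder (a m : ℝ) (hm : 0 < m) (x : ℝ) :
    HasDerivAt (fun y : ℝ => Real.cosh (y/m) ^ (-(m*a)))
      (-a * (Real.sinh (x/m) * Real.cosh (x/m) ^ (-(m*a) - 1))) x := by
  have h1 : HasDerivAt (fun y : ℝ => y/m) (1/m) x := by
    simpa using (hasDerivAt_id x).div_const m
  have h2 : HasDerivAt (fun y : ℝ => Real.cosh (y/m)) (Real.sinh (x/m) * (1/m)) x :=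
    by have := (Real.hasDerivAt_cosh (x/m)).comp x h1; exact this
  have h3 := h2.rpow_const (p := -(m*a)) (Or.inl (Real.cosh_pos _).ne')
  convert h3 using 1
  field_simp

private lemma wder2 (a m : ℝ) (x : ℝ) :
    HasDerivAt (fun y : ℝ => -a * (Real.sinh (y/m) * Real.cosh (y/m) ^ (-(m*a) - 1)))
      (-a * ((Real.cosh (x/m) * (1/m)) * Real.cosh (x/m) ^ (-(m*a) - 1)
        + Real.sinh (x/m) * (Real.sinh (x/m) * (1/m) * (-(m*a) - 1) * Real.cosh (x/m) ^ (-(m*a) - 1 - 1)))) x := by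
  have h1 : HasDerivAt (fun y : ℝ => y/m) (1/m) x := by
    simpa using (hasDerivAt_id x).div_const m
  have h2 : HasDerivAt (fun y : ℝ => Real.cosh (y/m)) (Real.sinh (x/m) * (1/m)) x :=
    by have := (Real.hasDerivAt_cosh (x/m)).comp x h1; exact this
  have h4 : HasDerivAt (fun y : ℝ => Real.sinh (y/m)) (Real.cosh (x/m) * (1/m)) x :=
    by have := (Real.hasDerivAt_sinh (x/m)).comp x h1; exact this
  have h5 := h2.rpow_const (p := -(m*a) - 1) (Or.inl (Real.cosh_pos _).ne')
  exact (h4.mul h5).const_mul (-a)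


private lemma keyalg (nR lam a m ch sh w s K X S2 W2 p : ℝ)
    (hm : m ≠ 0) (hch : ch ≠ 0) (hsh : sh = s * ch) :
    -(X * (S2 * W2) *
        ((p - 1) * (-a * (ch * (1/m) * (w/ch) + sh * (sh * (1/m) * (-(m*a) - 1) * (w/ch/ch))))
          + nR * K * (-a * (sh * (w/ch)))))
      - lam * (W2 * w)
    = W2 * w * (X * S2 * (nR*K*a*s - (p-1)*(a*a)*(s*s) + (p-1)*(a/m)*(1-s*s)) - lam) := by
  subst hsh
  field_simp
  ring

theorem stmt1 (n : ℕ) (hn : 2 ≤ n) (p : ℝ) (hp1 : 1 < p) (hpn : p < n)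
    (lam : ℝ) (hlam0 : 0 ≤ lam) (hlam1 : lam < (((n : ℝ) - 1) / p) ^ p)
    (alam : ℝ) (ha1 : ((n : ℝ) - 1) / p < alam) (ha2 : alam ≤ ((n : ℝ) - 1) / (p - 1))
    (ha : alam ^ (p - 1) * ((n : ℝ) - 1 - (p - 1) * alam) = lam)
    (m : ℝ) (hm : 2 ≤ m)
    (v : ℝ → ℝ) (hv : ∀ t : ℝ, 0 < t → v t = Real.cosh (t / m) ^ (-(m * alam))) :
    ∃ R > 0, ∃ c > 0, ∀ t > R,
      -(|deriv v t| ^ (p - 2) *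
          ((p - 1) * deriv (deriv v) t +
            ((n : ℝ) - 1) * (Real.cosh t / Real.sinh t) * deriv v t))
        - lam * v t ^ (p - 1)
      ≥ c * Real.exp (-2 * t / m) * v t ^ (p - 1) := by
  have hm0 : (0:ℝ) < m := by linarith
  have hN1 : (1:ℝ) ≤ (n:ℝ) - 1 := by
    have : (2:ℝ) ≤ (n:ℝ) := by exact_mod_cast hn
    linarith
  have hp0 : (0:ℝ) < p := by linarith
  have ha0 : 0 < alam := lt_trans (div_pos (by linarith) hp0) ha1
  have hpa : (n:ℝ) - 1 < p * alam := by
    rw [div_lt_iff₀ hp0] at ha1; linarith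
  obtain ⟨δ, hδ0, hδhalf, c0, hc00, hcore⟩ :=
    fcore ((n:ℝ)-1) p alam m lam hp1 ha0 hm0 hpa ha
  refine ⟨max 1 (m * Real.log (2/δ)), lt_of_lt_of_le one_pos (le_max_left _ _), c0, hc00,
    fun t ht => ?_⟩
  have ht1 : 1 < t := lt_of_le_of_lt (le_max_left _ _) ht
  have ht0 : 0 < t := by linarith
  have hT0 : 0 < t/m := div_pos ht0 hm0
  set ch : ℝ := Real.cosh (t/m) with hch_def
  set sh : ℝ := Real.sinh (t/m) with hsh_def
  have hch0 : 0 < ch := Real.cosh_pos _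
  have hsh0 : 0 < sh := Real.sinh_pos_iff.mpr hT0
  set w : ℝ := ch ^ (-(m*alam)) with hw_def
  have hw0 : 0 < w := Real.rpow_pos_of_pos hch0 _
  set s : ℝ := Real.tanh (t/m) with hs_def
  have hseq : s = sh / ch := Real.tanh_eq_sinh_div_cosh _
  have hsheq : sh = s * ch := by rw [hseq]; field_simp
  have hs0 : 0 < s := by rw [hseq]; positivity
  set K : ℝ := Real.cosh t / Real.sinh t with hK_def
  have hsinht : 0 < Real.sinh t := Real.sinh_pos_iff.mpr ht0
  have hK1 : 1 ≤ K := by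
    rw [hK_def, le_div_iff₀ hsinht]
    have := Real.cosh_sub_sinh t
    have : 0 < Real.cosh t - Real.sinh t := by rw [this]; positivity
    linarith
  -- tanh bounds
  obtain ⟨hlow, hup⟩ := tanh_bounds (t/m) hT0.le
  rw [← hs_def] at hlow hup
  have hexp0 : 0 < Real.exp (-(2*(t/m))) := Real.exp_pos _
  have hs1 : s < 1 := by linarith
  -- t > R implies 1 - s < δ
  have hsδ : 1 - δ < s := by
    have htR : m * Real.log (2/δ) < t := lt_of_le_of_lt (le_max_right _ _) ht
    have hlg : Real.log (2/δ) < t/m := by rw [← mul_lt_mul_iff_right₀ hm0]; field_simp; linarith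
    have hE : Real.exp (-(t/m)) < δ/2 := by
      have h2δ : (0:ℝ) < 2/δ := by positivity
      have h3 : Real.exp (-(Real.log (2/δ))) = δ/2 := by
        rw [Real.exp_neg, Real.exp_log h2δ, inv_div]
      have h4 : Real.exp (-(t/m)) < Real.exp (-(Real.log (2/δ))) :=
        Real.exp_lt_exp.mpr (by linarith)
      linarith [h3 ▸ h4]
    have hE2 : Real.exp (-(2*(t/m))) = Real.exp (-(t/m)) * Real.exp (-(t/m)) := by
      rw [← Real.exp_add]; congr 1; ring
    have hEpos : 0 < Real.exp (-(t/m)) := Real.exp_pos _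
    have : 2 * Real.exp (-(2*(t/m))) < δ := by
      rw [hE2]
      have h5 : Real.exp (-(t/m)) * Real.exp (-(t/m)) < (δ/2)*(δ/2) :=
        mul_lt_mul'' hE hE hEpos.le hEpos.le
      have h6 : δ*δ ≤ δ*(1/2) := mul_le_mul_of_nonneg_left hδhalf hδ0.le
      linarith [h5, h6]
    linarith
  -- derivatives of v
  have hveq : ∀ᶠ x in nhds t, v x = Real.cosh (x/m) ^ (-(m*alam)) := by
    filter_upwards [Ioi_mem_nhds ht0] with x hx using hv x hx
  have hvd : HasDerivAt v (-alam * (sh * ch ^ (-(m*alam) - 1))) t :=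
    (wder alam m hm0 t).congr_of_eventuallyEq hveq
  have hdv : deriv v t = -alam * (sh * ch ^ (-(m*alam) - 1)) := hvd.deriv
  have hdveq : ∀ x : ℝ, 0 < x →
      deriv v x = -alam * (Real.sinh (x/m) * Real.cosh (x/m) ^ (-(m*alam) - 1)) := by
    intro x hx
    have hveqx : ∀ᶠ y in nhds x, v y = Real.cosh (y/m) ^ (-(m*alam)) := by
      filter_upwards [Ioi_mem_nhds hx] with y hy using hv y hy
    exact ((wder alam m hm0 x).congr_of_eventuallyEq hveqx).deriv
  have hd2 : deriv (deriv v) t =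
      -alam * ((ch * (1/m)) * ch ^ (-(m*alam) - 1)
        + sh * (sh * (1/m) * (-(m*alam) - 1) * ch ^ (-(m*alam) - 1 - 1))) := by
    have hev2 : deriv v =ᶠ[nhds t]
        (fun y : ℝ => -alam * (Real.sinh (y/m) * Real.cosh (y/m) ^ (-(m*alam) - 1))) := by
      filter_upwards [Ioi_mem_nhds ht0] with x hx using hdveq x hx
    rw [hev2.deriv_eq]
    exact (wder2 alam m t).deriv
  -- rpow identities
  have rB : ch ^ (-(m*alam) - 1) = w / ch := by
    rw [hw_def, Real.rpow_sub hch0, Real.rpow_one]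
  have rC : ch ^ (-(m*alam) - 1 - 1) = w / ch / ch := by
    rw [Real.rpow_sub hch0, Real.rpow_one, rB]
  have hW12 : w^(p-2) * w = w^(p-1) := by
    rw [← Real.rpow_add_one hw0.ne' (p-2)]; ring_nf
  have hS1 : s^(p-2) * s = s^(p-1) := by
    rw [← Real.rpow_add_one hs0.ne' (p-2)]; ring_nf
  have hS2 : s^(p-1) * s = s^p := by
    rw [← Real.rpow_add_one hs0.ne' (p-1)]; ring_nf
  -- absolute value of deriv v
  have habs : |deriv v t| = alam * (s * w) := by
    rw [hdv, rB, hsheq]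
    have hval : -alam * (s * ch * (w / ch)) = -(alam * (s * w)) := by
      field_simp
    rw [hval, abs_neg, abs_of_pos (by positivity)]
  have habsp : |deriv v t| ^ (p-2) = alam^(p-2) * (s^(p-2) * w^(p-2)) := by
    rw [habs, Real.mul_rpow ha0.le (by positivity), Real.mul_rpow hs0.le hw0.le]
  have hvt : v t = w := hv t ht0
  clear_value ch sh w s K
  -- key algebraic identity
  have key : -(|deriv v t| ^ (p - 2) *
          ((p - 1) * deriv (deriv v) t + ((n : ℝ) - 1) * K * deriv v t))
        - lam * v t ^ (p - 1)
      = w^(p-1) * (alam^(p-2) * s^(p-2) *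
          (((n:ℝ)-1)*K*alam*s - (p-1)*(alam*alam)*(s*s) + (p-1)*(alam/m)*(1-s*s)) - lam) := by
    rw [habsp, hdv, hd2, hvt, rB, rC, ← hW12]
    exact keyalg ((n:ℝ)-1) lam alam m ch sh w s K (alam^(p-2)) (s^(p-2)) (w^(p-2)) p
      hm0.ne' hch0.ne' hsheq
  rw [key, hvt]
  -- inner inequality
  set X : ℝ := alam^(p-2) with hX_def
  have hX0 : 0 < X := Real.rpow_pos_of_pos ha0 _
  set S2 : ℝ := s^(p-2) with hS2_def
  have hS20 : 0 < S2 := Real.rpow_pos_of_pos hs0 _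
  clear_value X
  have hdrop : X * S2 * (((n:ℝ)-1)*K*alam*s - (p-1)*(alam*alam)*(s*s) + (p-1)*(alam/m)*(1-s*s))
      - X * S2 * (((n:ℝ)-1)*alam*s - (p-1)*(alam*alam)*(s*s) + (p-1)*(alam/m)*(1-s*s))
      = (X * S2 * (((n:ℝ)-1)*alam*s)) * (K - 1) := by ring
  have hdrop0 : 0 ≤ (X * S2 * (((n:ℝ)-1)*alam*s)) * (K - 1) := by
    apply mul_nonneg
    · positivity
    · linarith
  have heqF : X * S2 * (((n:ℝ)-1)*alam*s - (p-1)*(alam*alam)*(s*s) + (p-1)*(alam/m)*(1-s*s))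
      = X * (((n:ℝ)-1)*alam*s^(p-1) - (p-1)*(alam*alam)*s^p + (p-1)*(alam/m)*(s^(p-2) - s^p)) := by
    rw [← hS1, ← hS2, ← hS1, hS2_def]
    ring
  have hcore' := hcore s hsδ hs1
  have hinner : X * S2 * (((n:ℝ)-1)*K*alam*s - (p-1)*(alam*alam)*(s*s) + (p-1)*(alam/m)*(1-s*s))
      - lam ≥ c0 * (1 - s) := by
    have h1 : X * S2 * (((n:ℝ)-1)*alam*s - (p-1)*(alam*alam)*(s*s) + (p-1)*(alam/m)*(1-s*s))
        - lam ≥ c0 * (1-s) := by rw [heqF]; exact hcore'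
    linarith [hdrop, hdrop0, h1]
  -- exp bound
  have hexp_eq : Real.exp (-2 * t / m) = Real.exp (-(2*(t/m))) := by
    congr 1; ring
  have hfin : X * S2 * (((n:ℝ)-1)*K*alam*s - (p-1)*(alam*alam)*(s*s) + (p-1)*(alam/m)*(1-s*s))
      - lam ≥ c0 * Real.exp (-2 * t / m) := by
    rw [hexp_eq]
    have : c0 * Real.exp (-(2*(t/m))) ≤ c0 * (1-s) := by
      apply mul_le_mul_of_nonneg_left hlow hc00.le
    linarith
  have hwp : 0 < w^(p-1) := Real.rpow_pos_of_pos hw0 _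
  calc w^(p-1) * (X * S2 *
        (((n:ℝ)-1)*K*alam*s - (p-1)*(alam*alam)*(s*s) + (p-1)*(alam/m)*(1-s*s)) - lam)
      ≥ w^(p-1) * (c0 * Real.exp (-2 * t / m)) := by
        apply mul_le_mul_of_nonneg_left hfin hwp.le
    _ = c0 * Real.exp (-2 * t / m) * w^(p-1) := by ring
end

section
/- Let n ≥ 2 be an integer, p real with 1 < p < n, λ ∈ [0, ((n−1)/p)^p), and let α_λ be the unique root of α^(p−1)(n−1−(p−1)α) = λ in ((n−1)/p,(n−1)/(p−1)]. Define v(t) = (sinh(t/2))^(−2·α_λ) for t > 0. Then there exists R > 0 such that for all t > R, −|v′(t)|^(p−2) · ( (p−1)·v″(t) + (n−1)·coth(t)·v′(t) ) − λ·v(t)^(p−1) ≤ 0. (Equivalently, the radial function x ↦ v(dist(0,x)) is a subsolution of −Δ_p^{𝔹ⁿ} v − λ v^(p−1) ≤ 0 outside a large hyperbolic ball.) -/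
open Real Filter Set

private lemma key_lemma (r A B : ℝ) (h : 2 * r * B + A < 0) :
    ∃ x₀ > 0, ∀ x : ℝ, 0 < x → x ≤ x₀ → (1 + x) ^ r * (B + A * x / 2) ≤ B := by
  set g : ℝ → ℝ := fun x => (1 + x) ^ r * (B + A * x / 2) with hg
  have h1 : HasDerivAt (fun x : ℝ => (1 + x) ^ r) (r * (1 + (0:ℝ)) ^ (r - 1) * 1) 0 := by
    have hinner : HasDerivAt (fun x : ℝ => 1 + x) 1 0 := by
      simpa using (hasDerivAt_id (0:ℝ)).const_add 1
    exact (Real.hasDerivAt_rpow_const (p := r) (Or.inl (by norm_num))).comp 0 hinner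
  have h2 : HasDerivAt (fun x : ℝ => B + A * x / 2) (A / 2) 0 := by
    simpa using (((hasDerivAt_id (0:ℝ)).const_mul A).div_const 2).const_add B
  have hd : HasDerivAt g (r * B + A / 2) 0 := by
    have := h1.mul h2
    refine this.congr_deriv ?_
    norm_num [Real.one_rpow]
  have hneg : r * B + A / 2 < 0 := by linarith
  have hev1 : ∀ᶠ x in nhdsWithin (0:ℝ) {(0:ℝ)}ᶜ, slope g 0 x < 0 :=
    (hasDerivAt_iff_tendsto_slope.mp hd).eventually_lt_const hneg
  have hev2 : ∀ᶠ x in nhdsWithin (0:ℝ) (Ioi 0), slope g 0 x < 0 :=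
    hev1.filter_mono (nhdsWithin_mono 0 (fun x hx => ne_of_gt hx))
  obtain ⟨u, hu, hsub⟩ := mem_nhdsGT_iff_exists_Ioc_subset.mp hev2
  refine ⟨u, hu, fun x hx1 hx2 => ?_⟩
  have hx := hsub ⟨hx1, hx2⟩
  simp only [Set.mem_setOf_eq, slope_def_field] at hx
  have hg0 : g 0 = B := by simp [hg]
  rw [hg0, sub_zero] at hx
  have hgx : g x - B < 0 := by
    have h' := mul_neg_of_neg_of_pos hx hx1
    rwa [div_mul_cancel₀ _ (ne_of_gt hx1)] at h'
  have : g x < B := by linarith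
  simpa [hg] using this.le

private noncomputable def W (a : ℝ) (τ : ℝ) : ℝ := Real.sinh (τ/2) ^ (-(2*a))
private noncomputable def W1 (a : ℝ) (τ : ℝ) : ℝ :=
  -a * (Real.sinh (τ/2) ^ (-(2*a) - 1) * Real.cosh (τ/2))
private noncomputable def W2 (a : ℝ) (τ : ℝ) : ℝ :=
  -a * (((-(2*a) - 1) * Real.sinh (τ/2) ^ (-(2*a) - 2)) * (Real.cosh (τ/2) * Real.cosh (τ/2) / 2)
    + Real.sinh (τ/2) ^ (-(2*a) - 1) * (Real.sinh (τ/2) / 2))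

private lemma hasDeriv_sinh_half (τ : ℝ) :
    HasDerivAt (fun x : ℝ => Real.sinh (x/2)) (Real.cosh (τ/2) * (1/2)) τ := by
  have h := (Real.hasDerivAt_sinh (τ/2)).comp τ ((hasDerivAt_id τ).div_const 2)
  exact h

private lemma hasDeriv_cosh_half (τ : ℝ) :
    HasDerivAt (fun x : ℝ => Real.cosh (x/2)) (Real.sinh (τ/2) * (1/2)) τ := by
  have h := (Real.hasDerivAt_cosh (τ/2)).comp τ ((hasDerivAt_id τ).div_const 2)
  exact h

private lemma hasDeriv_W (a τ : ℝ) (hτ : 0 < τ) : HasDerivAt (W a) (W1 a τ) τ := by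
  have hs : (0:ℝ) < Real.sinh (τ/2) := Real.sinh_pos_iff.mpr (by linarith)
  have h := (Real.hasDerivAt_rpow_const (x := Real.sinh (τ/2)) (p := -(2*a))
    (Or.inl hs.ne')).comp τ (hasDeriv_sinh_half τ)
  refine h.congr_deriv ?_
  unfold W1
  ring

private lemma hasDeriv_W1 (a τ : ℝ) (hτ : 0 < τ) : HasDerivAt (W1 a) (W2 a τ) τ := by
  have hs : (0:ℝ) < Real.sinh (τ/2) := Real.sinh_pos_iff.mpr (by linarith)
  have h1 : HasDerivAt (fun x : ℝ => Real.sinh (x/2) ^ (-(2*a) - 1))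
      (((-(2*a) - 1) * Real.sinh (τ/2) ^ (-(2*a) - 2)) * (Real.cosh (τ/2) * (1/2))) τ := by
    have h := (Real.hasDerivAt_rpow_const (x := Real.sinh (τ/2)) (p := -(2*a) - 1)
      (Or.inl hs.ne')).comp τ (hasDeriv_sinh_half τ)
    rw [show -(2*a) - 1 - 1 = -(2*a) - 2 by ring] at h
    exact h
  have h2 := (h1.mul (hasDeriv_cosh_half τ)).const_mul (-a)
  refine h2.congr_deriv ?_
  unfold W2
  ring

set_option maxHeartbeats 1000000 in
theorem stmt2 (n : ℕ) (hn : 2 ≤ n) (p : ℝ) (hp1 : 1 < p) (hpn : p < n)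
    (lam : ℝ) (hlam0 : 0 ≤ lam) (hlam1 : lam < (((n : ℝ) - 1) / p) ^ p)
    (alam : ℝ) (ha1 : ((n : ℝ) - 1) / p < alam) (ha2 : alam ≤ ((n : ℝ) - 1) / (p - 1))
    (ha : alam ^ (p - 1) * ((n : ℝ) - 1 - (p - 1) * alam) = lam)
    (v : ℝ → ℝ) (hv : ∀ t : ℝ, 0 < t → v t = Real.sinh (t / 2) ^ (-(2 * alam))) :
    ∃ R > 0, ∀ t > R,
      -(|deriv v t| ^ (p - 2) *
          ((p - 1) * deriv (deriv v) t +
            ((n : ℝ) - 1) * (Real.cosh t / Real.sinh t) * deriv v t))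
        - lam * v t ^ (p - 1) ≤ 0 := by
  have hp0 : (0:ℝ) < p := by linarith
  have hn1 : (1:ℝ) ≤ (n:ℝ) - 1 := by
    have : (2:ℝ) ≤ (n:ℝ) := by exact_mod_cast hn
    linarith
  have halam : 0 < alam := lt_trans (div_pos (by linarith) hp0) ha1
  set A : ℝ := (n:ℝ) - 1 - (p - 1) * (2 * alam + 1) with hAdef
  set B : ℝ := (n:ℝ) - 1 - (p - 1) * alam with hBdef
  have hB : 0 ≤ B := by
    rw [hBdef]
    have := (le_div_iff₀ (by linarith : (0:ℝ) < p - 1)).mp ha2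
    linarith
  have hpalam : (n:ℝ) - 1 < p * alam := by
    have := (div_lt_iff₀ hp0).mp ha1
    linarith
  have hAB : 2 * ((p - 2)/2) * B + A < 0 := by
    have heq : 2 * ((p - 2)/2) * B + A = (p - 1) * ((n:ℝ) - 2 - p * alam) := by
      rw [hAdef, hBdef]; ring
    rw [heq]
    have h1 : (n:ℝ) - 2 - p * alam < 0 := by linarith
    exact mul_neg_of_pos_of_neg (by linarith) h1
  have hlamB : lam = alam ^ (p - 1) * B := by rw [hBdef, ← ha]
  obtain ⟨x₀, hx₀, hkey⟩ := key_lemma ((p - 2)/2) A B hAB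
  refine ⟨max 1 (2 / Real.sqrt x₀), lt_of_lt_of_le one_pos (le_max_left _ _), fun t ht => ?_⟩
  have ht1 : 1 < t := lt_of_le_of_lt (le_max_left _ _) ht
  have ht0 : 0 < t := by linarith
  have ht2 : 0 < t / 2 := by linarith
  set s : ℝ := Real.sinh (t/2) with hsdef
  set c : ℝ := Real.cosh (t/2) with hcdef
  have hs : 0 < s := Real.sinh_pos_iff.mpr ht2
  have hc : 0 < c := by rw [hcdef]; exact Real.cosh_pos _
  have hc2 : c ^ 2 = s ^ 2 + 1 := Real.cosh_sq (t/2)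
  -- x bound
  set x : ℝ := (s ^ 2)⁻¹ with hxdef
  have hxpos : 0 < x := by positivity
  have hsqrt : 0 < Real.sqrt x₀ := Real.sqrt_pos.mpr hx₀
  have hts : 1 / Real.sqrt x₀ < s := by
    have h1 : 2 / Real.sqrt x₀ < t := lt_of_le_of_lt (le_max_right _ _) ht
    have h2 : 1 / Real.sqrt x₀ < t / 2 := by
      have : 2 / Real.sqrt x₀ = 2 * (1 / Real.sqrt x₀) := by ring
      linarith [this ▸ h1]
    have h3 : t / 2 < s := by rw [hsdef]; exact Real.self_lt_sinh_iff.mpr ht2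
    linarith
  have hs2 : x₀⁻¹ < s ^ 2 := by
    have := pow_lt_pow_left₀ hts (by positivity) (two_ne_zero)
    rwa [div_pow, one_pow, Real.sq_sqrt hx₀.le, one_div] at this
  have hxx : x ≤ x₀ := by
    rw [hxdef]
    exact le_of_lt ((inv_lt_comm₀ (by positivity) hx₀).mpr hs2)
  -- derivatives
  have hmem : Set.Ioi (0:ℝ) ∈ nhds t := isOpen_Ioi.mem_nhds ht0
  have hvW : v =ᶠ[nhds t] W alam := by
    filter_upwards [hmem] with τ hτ
    rw [hv τ hτ]; rfl
  have hderiv_all : ∀ τ : ℝ, 0 < τ → deriv v τ = W1 alam τ := by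
    intro τ hτ
    have hvWτ : v =ᶠ[nhds τ] W alam := by
      filter_upwards [isOpen_Ioi.mem_nhds hτ] with σ hσ
      rw [hv σ hσ]; rfl
    exact ((hasDeriv_W alam τ hτ).congr_of_eventuallyEq hvWτ).deriv
  have hderiv_v : deriv v t = W1 alam t := hderiv_all t ht0
  have hdd : deriv (deriv v) t = W2 alam t := by
    have hev : deriv v =ᶠ[nhds t] W1 alam := by
      filter_upwards [hmem] with τ hτ
      exact hderiv_all τ hτ
    exact (((hasDeriv_W1 alam t ht0).congr_of_eventuallyEq hev)).deriv
  rw [hderiv_v, hdd, hv t ht0]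
  -- abbreviations for powers
  have hct : Real.cosh t = c ^ 2 + s ^ 2 := by
    rw [show t = 2 * (t/2) by ring, Real.cosh_two_mul]
  have hst : Real.sinh t = 2 * s * c := by
    rw [show t = 2 * (t/2) by ring, Real.sinh_two_mul]
  have hp2' : s ^ (-(2*alam) - 2) * s = s ^ (-(2*alam) - 1) := by
    nth_rewrite 2 [← Real.rpow_one s]
    rw [← Real.rpow_add hs]
    congr 1
    ring
  have hp1' : s ^ (-(2*alam) - 2) * s ^ 2 = s ^ (-(2*alam)) := by
    rw [← Real.rpow_natCast s 2, ← Real.rpow_add hs]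
    congr 1
    push_cast
    ring
  -- Step: E identity
  have hE : (p - 1) * W2 alam t + ((n:ℝ) - 1) * (Real.cosh t / Real.sinh t) * W1 alam t
      = -(alam/2) * (s ^ (-(2*alam) - 2) * (A + 2 * B * s ^ 2)) := by
    unfold W1 W2
    rw [← hsdef, ← hcdef, hct, hst, ← hp2']
    rw [show c * c = c ^ 2 by ring, hc2, hAdef, hBdef]
    field_simp
    ring
  -- Step: |W1| and its power
  have habs : |W1 alam t| = alam * (s ^ (-(2*alam) - 1) * c) := by
    unfold W1
    rw [← hsdef, ← hcdef, abs_mul, abs_mul, abs_neg, abs_of_pos halam,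
      abs_of_pos (Real.rpow_pos_of_pos hs _), abs_of_pos hc]
  have habsp : |W1 alam t| ^ (p - 2)
      = alam ^ (p - 2) * (s ^ ((-(2*alam) - 1) * (p - 2)) * c ^ (p - 2)) := by
    rw [habs, Real.mul_rpow halam.le (by positivity),
      Real.mul_rpow (by positivity) hc.le, Real.rpow_mul hs.le]
  -- power collecting lemmas
  have q1 : alam ^ (p - 2) * alam = alam ^ (p - 1) := by
    nth_rewrite 2 [← Real.rpow_one alam]
    rw [← Real.rpow_add halam]
    congr 1
    ring
  have q2 : s ^ ((-(2*alam) - 1) * (p - 2)) * s ^ (-(2*alam) - 2)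
      = s ^ (-(2*alam) * (p - 1)) * (s ^ (2 - p) * (s ^ 2)⁻¹) := by
    rw [← Real.rpow_natCast s 2, ← Real.rpow_neg hs.le, ← Real.rpow_add hs,
      ← Real.rpow_add hs, ← Real.rpow_add hs]
    congr 1
    push_cast
    ring
  have q3 : (c / s) ^ (p - 2) = c ^ (p - 2) * s ^ (2 - p) := by
    rw [Real.div_rpow hc.le hs.le, show (2 - p : ℝ) = -(p - 2) by ring,
      Real.rpow_neg hs.le, div_eq_mul_inv]
  -- key inequality transported
  have hKey2 : (c / s) ^ (p - 2) * (B + A * x / 2) ≤ B := by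
    have h1x : (1:ℝ) + x = (c/s) ^ 2 := by
      rw [hxdef, div_pow, hc2]
      field_simp
    have h2x : (1 + x) ^ ((p - 2)/2) = (c/s) ^ (p - 2) := by
      rw [h1x, ← Real.rpow_natCast (c/s) 2, ← Real.rpow_mul (by positivity)]
      congr 1
      push_cast
      ring
    calc (c / s) ^ (p - 2) * (B + A * x / 2)
        = (1 + x) ^ ((p - 2)/2) * (B + A * x / 2) := by rw [h2x]
      _ ≤ B := hkey x hxpos hxx
  -- final algebra
  have hVp : (s ^ (-(2*alam))) ^ (p - 1) = s ^ (-(2*alam) * (p - 1)) :=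
    (Real.rpow_mul hs.le _ _).symm
  have hD : 0 < s ^ (-(2*alam) * (p - 1)) := Real.rpow_pos_of_pos hs _
  have halp : 0 < alam ^ (p - 1) := Real.rpow_pos_of_pos halam _
  have hLHS : -(|W1 alam t| ^ (p - 2) *
      ((p - 1) * W2 alam t + ((n:ℝ) - 1) * (Real.cosh t / Real.sinh t) * W1 alam t))
      = alam ^ (p - 1) * s ^ (-(2*alam) * (p - 1)) * ((c / s) ^ (p - 2) * (B + A * x / 2)) := by
    rw [hE, habsp, q3, hxdef]
    have expand : -(alam ^ (p - 2) * (s ^ ((-(2*alam) - 1) * (p - 2)) * c ^ (p - 2)) *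
        (-(alam/2) * (s ^ (-(2*alam) - 2) * (A + 2 * B * s ^ 2))))
        = (alam ^ (p - 2) * alam) *
          ((s ^ ((-(2*alam) - 1) * (p - 2)) * s ^ (-(2*alam) - 2)) *
            (c ^ (p - 2) * (A + 2 * B * s ^ 2) / 2)) := by ring
    rw [expand, q1, q2]
    field_simp
    ring
  rw [hLHS, hVp, hlamB]
  have hfinal := mul_le_mul_of_nonneg_left hKey2 (le_of_lt (mul_pos halp hD))
  have hcomm : alam ^ (p - 1) * B * s ^ (-(2*alam) * (p - 1))
      = alam ^ (p - 1) * s ^ (-(2*alam) * (p - 1)) * B := by ring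
  linarith [hfinal, hcomm]
end

section
/- Let w : (0,∞) → ℝ be a positive C¹ function with w′(t) ≥ 0 for all t > 0, such that the function t ↦ t^(p−n)·(w′(t))^(p−1) is differentiable on (0,∞) and −tⁿ · (d/dt)( t^(p−n)·(w′(t))^(p−1) ) = λ·w(t)^(p−1) for all t > 0. Suppose there is a constant C ≥ 1 with t^(α_λ) ≤ w(t) ≤ C·t^(α_λ) for all t > 0. Then there exists c₀ ∈ [1, C] such that w(t) = c₀·t^(α_λ) for all t > 0. -/
open Real Filter Set Topology

/-- Crossing lemma: if y has derivative y' on (0,∞) and whenever y vanishes its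
derivative is negative, then y nonneg at t₀ implies y nonneg on (0, t₀]. -/
lemma cross_neg (y y' : ℝ → ℝ)
    (hy : ∀ t : ℝ, 0 < t → HasDerivAt y (y' t) t)
    (hneg : ∀ t : ℝ, 0 < t → y t = 0 → y' t < 0)
    (t₀ t₁ : ℝ) (h1 : 0 < t₁) (h2 : t₁ ≤ t₀) (h0 : 0 ≤ y t₀) :
    0 ≤ y t₁ := by
  by_contra hcon
  push_neg at hcon
  set U := {t : ℝ | t ∈ Icc t₁ t₀ ∧ y t < 0} with hU
  have hU1 : t₁ ∈ U := ⟨⟨le_refl _, h2⟩, hcon⟩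
  have hUne : U.Nonempty := ⟨t₁, hU1⟩
  have hUb : BddAbove U := ⟨t₀, fun x hx => hx.1.2⟩
  set c := sSup U with hc
  have hc1 : t₁ ≤ c := le_csSup hUb hU1
  have hc2 : c ≤ t₀ := csSup_le hUne (fun x hx => hx.1.2)
  have hcpos : 0 < c := lt_of_lt_of_le h1 hc1
  obtain ⟨u, hu_mono, hu_tend, hu_mem⟩ := exists_seq_tendsto_sSup hUne hUb
  have hycont : ContinuousAt y c := (hy c hcpos).continuousAt
  have hyc_le : y c ≤ 0 := by
    have h3 : Tendsto (fun k => y (u k)) atTop (𝓝 (y c)) := hycont.tendsto.comp hu_tend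
    exact le_of_tendsto h3 (Eventually.of_forall fun k => le_of_lt (hu_mem k).2)
  have hyc : y c = 0 := by
    rcases lt_or_eq_of_le hyc_le with hlt | heq
    · exfalso
      have hcne : c ≠ t₀ := by
        intro h; rw [h] at hlt; linarith
      have hclt : c < t₀ := lt_of_le_of_ne hc2 hcne
      have hev : ∀ᶠ s in 𝓝 c, y s < 0 := hycont.tendsto.eventually_lt_const hlt
      have hev2 : ∀ᶠ s in 𝓝[>] c, y s < 0 := hev.filter_mono nhdsWithin_le_nhds
      have hev3 : ∀ᶠ s in 𝓝[>] c, s < t₀ :=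
        eventually_nhdsWithin_of_eventually_nhds (eventually_lt_nhds hclt)
      have hev4 : ∀ᶠ s in 𝓝[>] c, c < s := eventually_mem_nhdsWithin
      obtain ⟨s, hs1, hs2, hs3⟩ := (hev2.and (hev3.and hev4)).exists
      have hsU : s ∈ U := ⟨⟨le_trans hc1 (le_of_lt hs3), le_of_lt hs2⟩, hs1⟩
      have := le_csSup hUb hsU
      linarith
    · exact heq.symm ▸ rfl
  have hder := hy c hcpos
  have hnegc := hneg c hcpos hyc
  have hukc : ∀ k, u k < c := by
    intro k
    refine lt_of_le_of_ne (le_csSup hUb (hu_mem k)) ?_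
    intro h
    have := (hu_mem k).2
    rw [h, hyc] at this
    linarith
  have hslope := hasDerivAt_iff_tendsto_slope.mp hder
  have hu_ne : Tendsto u atTop (𝓝[≠] c) := by
    refine tendsto_nhdsWithin_iff.mpr ⟨hu_tend, Eventually.of_forall fun k => ?_⟩
    exact (hukc k).ne
  have htend : Tendsto (fun k => slope y c (u k)) atTop (𝓝 (y' c)) := hslope.comp hu_ne
  have hge : 0 ≤ y' c := by
    refine ge_of_tendsto htend (Eventually.of_forall fun k => ?_)
    have hnum : y (u k) - y c < 0 := by rw [hyc]; simpa using (hu_mem k).2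
    have hden : u k - c < 0 := sub_neg.mpr (hukc k)
    have : 0 < (y (u k) - y c) / (u k - c) := div_pos_of_neg_of_neg hnum hden
    rw [slope_def_field]
    exact this.le
  linarith

/-- No upper-bounded function on (0, t₀] can have derivative ≤ -ρ/t everywhere there. -/
lemma no_log_decay (f f' : ℝ → ℝ)
    (hf : ∀ t : ℝ, 0 < t → HasDerivAt f (f' t) t)
    (t₀ ρ B : ℝ) (ht₀ : 0 < t₀) (hρ : 0 < ρ)
    (hd : ∀ t : ℝ, 0 < t → t ≤ t₀ → f' t ≤ -ρ / t)
    (hB : ∀ t : ℝ, 0 < t → t ≤ t₀ → f t ≤ B) : False := by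
  set t₁ := t₀ * Real.exp (-(B + 1 - f t₀) / ρ) with ht₁def
  have hft₀ : f t₀ ≤ B := hB t₀ ht₀ le_rfl
  have hexp : Real.exp (-(B + 1 - f t₀) / ρ) < 1 := by
    rw [Real.exp_lt_one_iff]
    apply div_neg_of_neg_of_pos _ hρ
    linarith
  have ht₁pos : 0 < t₁ := mul_pos ht₀ (Real.exp_pos _)
  have ht₁lt : t₁ < t₀ := by
    calc t₁ < t₀ * 1 := mul_lt_mul_of_pos_left hexp ht₀
      _ = t₀ := mul_one _
  set h : ℝ → ℝ := fun t => f t + ρ * Real.log t with hhdef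
  have hder : ∀ x ∈ Icc t₁ t₀, 0 < x → HasDerivAt h (f' x + ρ * x⁻¹) x := by
    intro x _ hxpos
    exact (hf x hxpos).add ((Real.hasDerivAt_log hxpos.ne').const_mul ρ)
  have hanti : AntitoneOn h (Icc t₁ t₀) := by
    apply antitoneOn_of_deriv_nonpos (convex_Icc _ _)
    · intro x hx
      exact (hder x hx (lt_of_lt_of_le ht₁pos hx.1)).continuousAt.continuousWithinAt
    · intro x hx
      rw [interior_Icc] at hx
      have hxpos : 0 < x := lt_of_lt_of_le ht₁pos hx.1.le
      exact (hder x (Ioo_subset_Icc_self hx) hxpos).differentiableAt.differentiableWithinAt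
    · intro x hx
      rw [interior_Icc] at hx
      have hxpos : 0 < x := lt_of_lt_of_le ht₁pos hx.1.le
      rw [(hder x (Ioo_subset_Icc_self hx) hxpos).deriv]
      have h1 := hd x hxpos (le_of_lt hx.2)
      have h2 : -ρ / x = -(ρ * x⁻¹) := by field_simp
      rw [h2] at h1
      linarith
  have hle : h t₀ ≤ h t₁ :=
    hanti ⟨le_rfl, ht₁lt.le⟩ ⟨ht₁lt.le, le_rfl⟩ ht₁lt.le
  have hlog : Real.log t₁ = Real.log t₀ + (-(B + 1 - f t₀) / ρ) := by
    rw [ht₁def, Real.log_mul ht₀.ne' (Real.exp_pos _).ne', Real.log_exp]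
  have hft₁ : f t₁ ≤ B := hB t₁ ht₁pos ht₁lt.le
  have : f t₀ + ρ * Real.log t₀ ≤ f t₁ + ρ * (Real.log t₀ + (-(B + 1 - f t₀) / ρ)) := by
    simpa [hhdef, hlog] using hle
  have hcalc : ρ * (-(B + 1 - f t₀) / ρ) = -(B + 1 - f t₀) := by
    field_simp
  nlinarith [this, hcalc]

lemma psi_pos (p α κ β δ : ℝ) (hp : 1 < p) (hκ0 : 0 ≤ κ) (hκα : κ < α)
    (hβ : β * (p - 1) = κ) (hδ0 : 0 < δ) (hδ1 : δ < 1) :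
    0 < α * (1 - δ) - β * δ * (1 - δ ^ (p - 1)) := by
  have hP : 0 < p - 1 := by linarith
  have hβ0 : 0 ≤ β := by
    by_contra hb
    push_neg at hb
    nlinarith
  have hbern : 1 + p * (δ - 1) ≤ δ ^ p := by
    have := one_add_mul_self_le_rpow_one_add (s := δ - 1) (p := p) (by linarith) hp.le
    simpa using this
  have hsplit : δ ^ p = δ * δ ^ (p - 1) := by
    rw [show p = 1 + (p - 1) by ring, Real.rpow_add hδ0, Real.rpow_one]
    ring_nf
  rw [hsplit] at hbern
  set E := δ ^ (p - 1) with hE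
  -- δ(1-E) ≤ (p-1)(1-δ)
  have h1 : δ * (1 - E) ≤ (p - 1) * (1 - δ) := by nlinarith
  have h2 : β * (δ * (1 - E)) ≤ β * ((p - 1) * (1 - δ)) :=
    mul_le_mul_of_nonneg_left h1 hβ0
  have h3 : β * ((p - 1) * (1 - δ)) = κ * (1 - δ) := by rw [← hβ]; ring
  nlinarith
lemma psi_neg (p α κ β Z₀ : ℝ) (hp : 1 < p) (hκ0 : 0 ≤ κ) (hκα : κ < α) (hα : 0 < α)
    (hβ : β * (p - 1) = κ) (hZ : 1 < Z₀) :
    ∃ δ : ℝ, 1 < δ ∧ δ < Z₀ ∧ α * (1 - δ) - β * δ * (1 - δ ^ (p - 1)) < 0 := by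
  have hP : 0 < p - 1 := by linarith
  have hβ0 : 0 ≤ β := by
    by_contra hb
    push_neg at hb
    nlinarith
  -- continuity pick
  have hcrpow : ContinuousAt (fun s : ℝ => s ^ (p - 1)) 1 :=
    Real.continuousAt_rpow_const 1 (p - 1) (Or.inl one_ne_zero)
  have hcont : ContinuousAt (fun s : ℝ => κ * (p * s ^ (p - 1) - 1)) 1 :=
    (((hcrpow.const_mul p).sub continuousAt_const).const_mul κ)
  have hval : κ * (p * (1:ℝ) ^ (p - 1) - 1) < α * (p - 1) := by
    rw [Real.one_rpow]
    nlinarith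
  have hev : ∀ᶠ s in 𝓝 (1:ℝ), κ * (p * s ^ (p - 1) - 1) < α * (p - 1) := by
    have := hcont.tendsto.eventually_lt_const hval
    simpa using this
  have hev2 : ∀ᶠ s in 𝓝 (1:ℝ), s < Z₀ := eventually_lt_nhds hZ
  have hev3 : ∀ᶠ s in 𝓝[>] (1:ℝ), (κ * (p * s ^ (p - 1) - 1) < α * (p - 1)) ∧ s < Z₀ :=
    ((hev.and hev2).filter_mono nhdsWithin_le_nhds)
  have hev4 : ∀ᶠ s in 𝓝[>] (1:ℝ), 1 < s := eventually_mem_nhdsWithin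
  obtain ⟨δ, hδq, hδ1⟩ := (hev3.and hev4).exists
  refine ⟨δ, hδ1, hδq.2, ?_⟩
  have hδ0 : 0 < δ := by linarith
  have hq := hδq.1
  -- Bernoulli at 1/δ
  have hbern : 1 + p * ((1 - δ) / δ) ≤ (δ⁻¹) ^ p := by
    have h0 : (1:ℝ) + (1 - δ)/δ = δ⁻¹ := by field_simp; ring
    have hm1 : (-1:ℝ) ≤ (1 - δ)/δ := by
      rw [le_div_iff₀ hδ0]; linarith
    have := one_add_mul_self_le_rpow_one_add hm1 hp.le
    rwa [h0] at this
  set E := δ ^ (p - 1) with hE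
  have hEpos : 0 < E := Real.rpow_pos_of_pos hδ0 _
  have hF : δ ^ p = δ * E := by
    rw [hE]
    rw [show p = 1 + (p - 1) by ring, Real.rpow_add hδ0, Real.rpow_one]
    norm_num
  have hFpos : (0:ℝ) < δ ^ p := Real.rpow_pos_of_pos hδ0 _
  rw [Real.inv_rpow hδ0.le] at hbern
  have h6 : (1 + p * ((1 - δ) / δ)) * (δ ^ p) ≤ 1 := by
    have := mul_le_mul_of_nonneg_right hbern hFpos.le
    rwa [inv_mul_cancel₀ hFpos.ne'] at this
  rw [hF] at h6
  have h7 : δ * E - 1 ≤ p * E * (δ - 1) := by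
    have hexp : (1 + p * ((1 - δ) / δ)) * (δ * E) = δ * E + p * E * (1 - δ) := by
      field_simp
    rw [hexp] at h6
    linarith
  have h8 : β * ((δ - 1) * (1 - p * E)) ≤ β * (δ * (1 - E)) :=
    mul_le_mul_of_nonneg_left (by nlinarith) hβ0
  have h9 : β * (p * E - 1) * (p - 1) = κ * (p * E - 1) := by rw [← hβ]; ring
  have h10 : β * (p * E - 1) < α := by nlinarith
  nlinarith [mul_lt_mul_of_pos_left h10 (show (0:ℝ) < δ - 1 by linarith)]

lemma const_on_of_deriv_zero (f : ℝ → ℝ) (a b : ℝ) (hab : a ≤ b)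
    (hf : ∀ x ∈ Icc a b, HasDerivAt f 0 x) : f b = f a := by
  have hc : ContinuousOn f (Icc a b) := fun x hx =>
    (hf x hx).continuousAt.continuousWithinAt
  have hd : DifferentiableOn ℝ f (interior (Icc a b)) := fun x hx =>
    ((hf x (interior_subset hx)).differentiableAt).differentiableWithinAt
  have h0 : ∀ x ∈ interior (Icc a b), deriv f x = 0 := fun x hx =>
    (hf x (interior_subset hx)).deriv
  have hm := monotoneOn_of_deriv_nonneg (convex_Icc a b) hc hd
    (fun x hx => (h0 x hx).ge)
  have han := antitoneOn_of_deriv_nonpos (convex_Icc a b) hc hd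
    (fun x hx => (h0 x hx).le)
  exact le_antisymm (han ⟨le_rfl, hab⟩ ⟨hab, le_rfl⟩ hab)
    (hm ⟨le_rfl, hab⟩ ⟨hab, le_rfl⟩ hab)

set_option maxHeartbeats 2000000 in
theorem stmt10 (n : ℕ) (hn : 2 ≤ n) (p : ℝ) (hp1 : 1 < p) (hpn : p < n)
    (lam : ℝ) (hlam0 : 0 ≤ lam) (hlam1 : lam < (((n : ℝ) - 1) / p) ^ p)
    (alam : ℝ) (ha1 : ((n : ℝ) - 1) / p < alam) (ha2 : alam ≤ ((n : ℝ) - 1) / (p - 1))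
    (ha : alam ^ (p - 1) * ((n : ℝ) - 1 - (p - 1) * alam) = lam)
    (w w' : ℝ → ℝ)
    (hderiv : ∀ t : ℝ, 0 < t → HasDerivAt w (w' t) t)
    (hw'cont : ContinuousOn w' (Set.Ioi 0))
    (hwpos : ∀ t : ℝ, 0 < t → 0 < w t)
    (hw'0 : ∀ t : ℝ, 0 < t → 0 ≤ w' t)
    (hODE : ∀ t : ℝ, 0 < t → ∃ d : ℝ,
      HasDerivAt (fun s : ℝ => s ^ (p - (n : ℝ)) * w' s ^ (p - 1)) d t ∧
      -(t ^ n) * d = lam * w t ^ (p - 1))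
    (C : ℝ) (hC : 1 ≤ C)
    (hbd : ∀ t : ℝ, 0 < t → t ^ alam ≤ w t ∧ w t ≤ C * t ^ alam) :
    ∃ c₀ ∈ Set.Icc (1 : ℝ) C, ∀ t : ℝ, 0 < t → w t = c₀ * t ^ alam := by
  have hn1 : (1:ℝ) ≤ (n:ℝ) - 1 := by
    have h2n : (2:ℝ) ≤ (n:ℝ) := by exact_mod_cast hn
    linarith
  have hp0 : (0:ℝ) < p := by linarith
  have hP : (0:ℝ) < p - 1 := by linarith
  have hα : 0 < alam := lt_trans (div_pos (by linarith) hp0) ha1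
  set κ := (n:ℝ) - 1 - (p - 1) * alam with hκdef
  have hκ0 : 0 ≤ κ := by
    rw [le_div_iff₀ hP] at ha2
    rw [hκdef]; linarith
  have hκα : κ < alam := by
    rw [div_lt_iff₀ hp0] at ha1
    rw [hκdef]; nlinarith
  have hlam : lam = alam ^ (p - 1) * κ := by rw [hκdef, ← ha]
  set β := κ / (p - 1) with hβdef
  have hβ : β * (p - 1) = κ := div_mul_cancel₀ _ hP.ne'
  -- the ODE in explicit form
  have gdef : ∀ t : ℝ, 0 < t → ∃ d : ℝ,
      HasDerivAt (fun s : ℝ => s ^ (p - (n : ℝ)) * w' s ^ (p - 1)) d t ∧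
      d = -(lam * w t ^ (p - 1)) / t ^ n := by
    intro t ht
    obtain ⟨d, h1, h2⟩ := hODE t ht
    refine ⟨d, h1, ?_⟩
    have htn : (0:ℝ) < t ^ n := pow_pos ht n
    field_simp
    linarith
  -- positivity of w'
  have hw'pos : ∀ t : ℝ, 0 < t → 0 < w' t := by
    intro t₀ ht₀
    rcases lt_or_eq_of_le (hw'0 t₀ ht₀) with h | h
    · exact h
    exfalso
    set g : ℝ → ℝ := fun s => s ^ (p - (n:ℝ)) * w' s ^ (p - 1) with hgdef
    have hganti : ∀ s : ℝ, t₀ ≤ s → g s ≤ g t₀ := by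
      intro s hs
      have hanti : AntitoneOn g (Icc t₀ s) := by
        apply antitoneOn_of_deriv_nonpos (convex_Icc _ _)
        · intro x hx
          have hx0 : 0 < x := lt_of_lt_of_le ht₀ hx.1
          obtain ⟨d, h1, _⟩ := gdef x hx0
          exact h1.continuousAt.continuousWithinAt
        · intro x hx
          rw [interior_Icc] at hx
          have hx0 : 0 < x := lt_of_lt_of_le ht₀ hx.1.le
          obtain ⟨d, h1, _⟩ := gdef x hx0
          exact h1.differentiableAt.differentiableWithinAt
        · intro x hx
          rw [interior_Icc] at hx
          have hx0 : 0 < x := lt_of_lt_of_le ht₀ hx.1.le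
          obtain ⟨d, h1, h2⟩ := gdef x hx0
          rw [h1.deriv, h2]
          have hxn : (0:ℝ) < x ^ n := pow_pos hx0 n
          have hwP : (0:ℝ) ≤ w x ^ (p-1) := Real.rpow_nonneg (hwpos x hx0).le _
          apply div_nonpos_of_nonpos_of_nonneg _ hxn.le
          simp only [neg_nonpos]
          positivity
      exact hanti ⟨le_rfl, hs⟩ ⟨hs, le_rfl⟩ hs
    have hg0 : g t₀ = 0 := by
      simp only [hgdef, ← h, Real.zero_rpow hP.ne', mul_zero]
    have hw'eq : ∀ s : ℝ, t₀ ≤ s → w' s = 0 := by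
      intro s hs
      have hs0 : 0 < s := lt_of_lt_of_le ht₀ hs
      have h1 : g s ≤ 0 := hg0 ▸ hganti s hs
      have h2 : 0 ≤ w' s ^ (p-1) := Real.rpow_nonneg (hw'0 s hs0) _
      have h3 : 0 < s ^ (p - (n:ℝ)) := Real.rpow_pos_of_pos hs0 _
      have h4 : w' s ^ (p - 1) = 0 := by
        by_contra hne
        have h5 : 0 < w' s ^ (p-1) := lt_of_le_of_ne h2 (Ne.symm hne)
        have : 0 < g s := mul_pos h3 h5
        linarith
      exact (Real.rpow_eq_zero (hw'0 s hs0) hP.ne').mp h4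
    have hwconst : ∀ T : ℝ, t₀ ≤ T → w T = w t₀ := by
      intro T hT
      apply const_on_of_deriv_zero w t₀ T hT
      intro x hx
      have hx0 : 0 < x := lt_of_lt_of_le ht₀ hx.1
      have := hderiv x hx0
      rwa [hw'eq x hx.1] at this
    set T := max t₀ ((w t₀ + 1) ^ alam⁻¹) with hT
    have hT1 : t₀ ≤ T := le_max_left _ _
    have hTpos : 0 < T := lt_of_lt_of_le ht₀ hT1
    have h5 : (w t₀ + 1) ^ alam⁻¹ ≤ T := le_max_right _ _
    have hwt₀pos : (0:ℝ) < w t₀ + 1 := by linarith [hwpos t₀ ht₀]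
    have h6 : ((w t₀ + 1) ^ alam⁻¹) ^ alam ≤ T ^ alam :=
      Real.rpow_le_rpow (Real.rpow_nonneg hwt₀pos.le _) h5 hα.le
    rw [← Real.rpow_mul hwt₀pos.le, inv_mul_cancel₀ hα.ne', Real.rpow_one] at h6
    have h7 := (hbd T hTpos).1
    have h8 := hwconst T hT1
    linarith
  -- definitions
  set m : ℝ → ℝ := fun t => w t * t ^ (-alam) with hmdef
  set M : ℝ → ℝ := fun t => w' t * t ^ (1 - alam) / alam with hMdef
  have hMpos : ∀ t : ℝ, 0 < t → 0 < M t := by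
    intro t ht
    exact div_pos (mul_pos (hw'pos t ht) (Real.rpow_pos_of_pos ht _)) hα
  have hm_ge1 : ∀ t : ℝ, 0 < t → 1 ≤ m t := by
    intro t ht
    have h := (hbd t ht).1
    have htα : (0:ℝ) < t ^ alam := Real.rpow_pos_of_pos ht _
    simp only [hmdef]
    rw [Real.rpow_neg ht.le, ← div_eq_mul_inv, le_div_iff₀ htα]
    linarith
  have hm_leC : ∀ t : ℝ, 0 < t → m t ≤ C := by
    intro t ht
    have h := (hbd t ht).2
    have htα : (0:ℝ) < t ^ alam := Real.rpow_pos_of_pos ht _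
    simp only [hmdef]
    rw [Real.rpow_neg ht.le, ← div_eq_mul_inv, div_le_iff₀ htα]
    linarith
  -- derivative of m
  have hm' : ∀ t : ℝ, 0 < t → HasDerivAt m (alam * (M t - m t) / t) t := by
    intro t ht
    have h1 : HasDerivAt (fun s : ℝ => s ^ (-alam)) (-alam * t ^ (-alam - 1)) t :=
      Real.hasDerivAt_rpow_const (Or.inl ht.ne')
    have h2 : HasDerivAt (fun y : ℝ => w y * y ^ (-alam))
        (w' t * t ^ (-alam) + w t * (-alam * t ^ (-alam - 1))) t := (hderiv t ht).mul h1
    convert h2 using 1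
    have e1 : t ^ (1 - alam) = t * t ^ (-alam) := by
      rw [show (1:ℝ) - alam = 1 + -alam by ring, Real.rpow_add ht, Real.rpow_one]
    have e2 : t ^ (-alam - 1) = t ^ (-alam) / t := by
      rw [show -alam - 1 = -alam + -1 by ring, Real.rpow_add ht, Real.rpow_neg_one]
      ring
    simp only [hMdef, hmdef]
    rw [e1, e2]
    field_simp
    ring
  -- derivative of M and the crossing identity
  have hMd : ∀ t : ℝ, 0 < t → ∃ Md : ℝ, HasDerivAt M Md t ∧
      ∀ δ : ℝ, 0 < δ → m t = δ * M t → t * Md = β * M t * (1 - δ ^ (p - 1)) := by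
    intro t ht
    obtain ⟨d, hgd, hdval⟩ := gdef t ht
    have hApos : (0:ℝ) < alam ^ (p - 1) := Real.rpow_pos_of_pos hα _
    set A := (alam ^ (p - 1))⁻¹ with hA
    set g : ℝ → ℝ := fun s => s ^ (p - (n:ℝ)) * w' s ^ (p - 1) with hgdef2
    set G : ℝ → ℝ := fun s => A * (s ^ κ * g s) with hGdef
    have hGM : ∀ s : ℝ, 0 < s → G s = M s ^ (p - 1) := by
      intro s hs
      have hw's := hw'pos s hs
      have h1 : M s ^ (p-1) = (w' s * s ^ (1 - alam)) ^ (p-1) / alam ^ (p-1) := by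
        simp only [hMdef]
        rw [Real.div_rpow (by positivity) hα.le]
      rw [h1, Real.mul_rpow (hw'0 s hs) (Real.rpow_nonneg hs.le _),
        ← Real.rpow_mul hs.le]
      simp only [hGdef, hgdef2]
      rw [show s ^ κ * (s ^ (p - (n:ℝ)) * w' s ^ (p-1))
          = s ^ κ * s ^ (p - (n:ℝ)) * w' s ^ (p-1) by ring, ← Real.rpow_add hs]
      rw [show κ + (p - (n:ℝ)) = (1 - alam) * (p - 1) by rw [hκdef]; ring]
      rw [hA]
      field_simp
    have hMpos_t : 0 < M t := hMpos t ht
    have hGpos : 0 < G t := by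
      rw [hGM t ht]; exact Real.rpow_pos_of_pos hMpos_t _
    have hGd : HasDerivAt G (A * ((κ * t ^ (κ - 1)) * g t + t ^ κ * d)) t := by
      have h1 : HasDerivAt (fun s : ℝ => s ^ κ) (κ * t ^ (κ - 1)) t :=
        Real.hasDerivAt_rpow_const (Or.inl ht.ne')
      exact (h1.mul hgd).const_mul A
    have hMG : (fun s => G s ^ (p - 1)⁻¹) =ᶠ[𝓝 t] M := by
      filter_upwards [Ioi_mem_nhds ht] with s hs
      rw [hGM s hs, ← Real.rpow_mul (hMpos s hs).le,
        mul_inv_cancel₀ hP.ne', Real.rpow_one]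
    have hMder : HasDerivAt M
        ((A * ((κ * t ^ (κ - 1)) * g t + t ^ κ * d)) * (p-1)⁻¹ * G t ^ ((p-1)⁻¹ - 1)) t := by
      have h1 := hGd.rpow_const (p := (p-1)⁻¹) (Or.inl hGpos.ne')
      exact h1.congr_of_eventuallyEq hMG.symm
    refine ⟨_, hMder, ?_⟩
    intro δ hδ hmδ
    -- auxiliary identities
    have hwt := hwpos t ht
    have emP : m t ^ (p - 1) = w t ^ (p-1) * t ^ (-alam * (p-1)) := by
      simp only [hmdef]
      rw [Real.mul_rpow hwt.le (Real.rpow_nonneg ht.le _), ← Real.rpow_mul ht.le]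
    have etn : (t:ℝ) ^ n = t ^ ((n:ℕ):ℝ) := (Real.rpow_natCast t n).symm
    have e4 : t * (t ^ κ * d) = -(lam * (w t ^ (p-1) * t ^ (κ + 1 - (n:ℝ)))) := by
      rw [hdval, etn]
      rw [show κ + 1 - ((n:ℕ):ℝ) = κ + 1 + -((n:ℕ):ℝ) by push_cast; ring,
        Real.rpow_add ht, Real.rpow_add ht, Real.rpow_one, Real.rpow_neg ht.le]
      have htn : (0:ℝ) < t ^ ((n:ℕ):ℝ) := Real.rpow_pos_of_pos ht _
      field_simp
    have e5 : κ + 1 - (n:ℝ) = -alam * (p-1) := by rw [hκdef]; ring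
    have e6 : A * lam = κ := by
      rw [hA, hlam]; field_simp
    have e7 : t * t ^ (κ - 1) = t ^ κ := by
      rw [show κ = 1 + (κ - 1) by ring, Real.rpow_add ht, Real.rpow_one]
      ring_nf
    have step1 : t * (A * ((κ * t ^ (κ - 1)) * g t + t ^ κ * d))
        = κ * (G t - m t ^ (p-1)) := by
      have hGt : G t = A * (t ^ κ * g t) := rfl
      calc t * (A * ((κ * t ^ (κ - 1)) * g t + t ^ κ * d))
          = κ * (A * ((t * t ^ (κ-1)) * g t)) + A * (t * (t ^ κ * d)) := by ring
        _ = κ * (A * (t ^ κ * g t)) + A * (-(lam * (w t ^ (p-1) * t ^ (κ + 1 - (n:ℝ))))) := by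
            rw [e7, e4]
        _ = κ * G t - (A * lam) * (w t ^ (p-1) * t ^ (κ + 1 - (n:ℝ))) := by
            rw [hGt]; push_cast; ring
        _ = κ * G t - κ * (w t ^ (p-1) * t ^ (-alam * (p-1))) := by rw [e6, e5]
        _ = κ * (G t - m t ^ (p-1)) := by rw [emP]; ring
    have step2 : G t ^ ((p-1)⁻¹ - 1) = M t ^ (1 - (p-1)) := by
      rw [hGM t ht, ← Real.rpow_mul hMpos_t.le]
      congr 1
      field_simp
    have step3 : m t ^ (p-1) = δ ^ (p-1) * M t ^ (p-1) := by
      rw [hmδ, Real.mul_rpow hδ.le hMpos_t.le]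
    have step4 : M t ^ (1 - (p-1)) * M t ^ (p-1) = M t := by
      rw [← Real.rpow_add hMpos_t]
      norm_num
    calc t * ((A * ((κ * t ^ (κ - 1)) * g t + t ^ κ * d)) * (p-1)⁻¹ * G t ^ ((p-1)⁻¹ - 1))
        = (t * (A * ((κ * t ^ (κ - 1)) * g t + t ^ κ * d))) * (p-1)⁻¹ * G t ^ ((p-1)⁻¹ - 1) := by
          ring
      _ = (κ * (M t ^ (p-1) - δ ^ (p-1) * M t ^ (p-1))) * (p-1)⁻¹ * M t ^ (1 - (p-1)) := by
          rw [step1, step2, step3, hGM t ht]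
      _ = (κ * (p-1)⁻¹) * (1 - δ ^ (p-1)) * (M t ^ (1 - (p-1)) * M t ^ (p-1)) := by ring
      _ = β * M t * (1 - δ ^ (p-1)) := by
          rw [step4, hβdef]
          ring
  choose! Md hMda hMdb using hMd
  -- rigidity: m = M everywhere
  have hMm : ∀ t₀ : ℝ, 0 < t₀ → m t₀ = M t₀ := by
    intro t₀ ht₀
    by_contra hne
    have hM₀ := hMpos t₀ ht₀
    have hm₀ : (0:ℝ) < m t₀ := lt_of_lt_of_le one_pos (hm_ge1 t₀ ht₀)
    rcases lt_or_gt_of_ne hne with hlt | hgt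
    · -- m t₀ < M t₀
      set δ := m t₀ / M t₀ with hδdef
      have hδ0 : 0 < δ := div_pos hm₀ hM₀
      have hδ1 : δ < 1 := (div_lt_one hM₀).mpr hlt
      have hψ := psi_pos p alam κ β δ hp1 hκ0 hκα hβ hδ0 hδ1
      set y : ℝ → ℝ := fun t => δ * M t - m t with hydef
      set y' : ℝ → ℝ := fun t => δ * Md t - alam * (M t - m t) / t with hy'def
      have hyd : ∀ t : ℝ, 0 < t → HasDerivAt y (y' t) t := fun t ht =>
        ((hMda t ht).const_mul δ).sub (hm' t ht)
      have hyneg : ∀ t : ℝ, 0 < t → y t = 0 → y' t < 0 := by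
        intro t ht hy0
        have hMt := hMpos t ht
        have hmδ : m t = δ * M t := by
          simp only [hydef] at hy0; linarith
        have hcross := hMdb t ht δ hδ0 hmδ
        have h1 : t * y' t = -(M t * (alam * (1-δ) - β * δ * (1 - δ^(p-1)))) := by
          simp only [hy'def]
          rw [mul_sub, show t * (δ * Md t) = δ * (t * Md t) by ring, hcross,
            mul_div_cancel₀ _ ht.ne', hmδ]
          ring
        have h2 : t * y' t < 0 := by
          rw [h1]
          have h3 : 0 < M t * (alam * (1-δ) - β * δ * (1 - δ^(p-1))) := mul_pos hMt hψ
          linarith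
        by_contra h3
        push_neg at h3
        nlinarith [mul_nonneg ht.le h3]
      have hy₀ : 0 ≤ y t₀ := by
        simp only [hydef, hδdef]
        rw [div_mul_cancel₀ _ hM₀.ne']
        simp
      have hlow : ∀ t : ℝ, 0 < t → t ≤ t₀ → 0 ≤ y t := fun t h1 h2 =>
        cross_neg y y' hyd hyneg t₀ t h1 h2 hy₀
      set ρ := alam * ((1 - δ)/δ) with hρdef
      have hρ : 0 < ρ := mul_pos hα (div_pos (by linarith) hδ0)
      apply no_log_decay (fun t => -m t) (fun t => -(alam * (M t - m t) / t))
        (fun t ht => (hm' t ht).neg) t₀ ρ (-1) ht₀ hρ ?_ ?_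
      · intro t ht hle
        have hy := hlow t ht hle
        have hm1 := hm_ge1 t ht
        simp only [hydef] at hy
        have key : (1-δ)/δ ≤ M t - m t := by
          rw [div_le_iff₀ hδ0]
          nlinarith
        have h6 : ρ ≤ alam * (M t - m t) := by
          have := mul_le_mul_of_nonneg_left key hα.le
          rw [hρdef]; linarith
        have h7 : ρ / t ≤ alam * (M t - m t) / t :=
          (div_le_div_iff_of_pos_right ht).mpr h6
        rw [neg_div]
        linarith
      · intro t ht _
        have := hm_ge1 t ht
        show -m t ≤ -1
        linarith
    · -- M t₀ < m t₀
      set Z₀ := m t₀ / M t₀ with hZdef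
      have hZ : 1 < Z₀ := (one_lt_div hM₀).mpr hgt
      obtain ⟨δ, hδ1, hδZ, hψ⟩ := psi_neg p alam κ β Z₀ hp1 hκ0 hκα hα hβ hZ
      have hδ0 : (0:ℝ) < δ := by linarith
      set y : ℝ → ℝ := fun t => m t - δ * M t with hydef
      set y' : ℝ → ℝ := fun t => alam * (M t - m t) / t - δ * Md t with hy'def
      have hyd : ∀ t : ℝ, 0 < t → HasDerivAt y (y' t) t := fun t ht =>
        (hm' t ht).sub ((hMda t ht).const_mul δ)
      have hyneg : ∀ t : ℝ, 0 < t → y t = 0 → y' t < 0 := by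
        intro t ht hy0
        have hMt := hMpos t ht
        have hmδ : m t = δ * M t := by
          simp only [hydef] at hy0; linarith
        have hcross := hMdb t ht δ hδ0 hmδ
        have h1 : t * y' t = M t * (alam * (1-δ) - β * δ * (1 - δ^(p-1))) := by
          simp only [hy'def]
          rw [mul_sub, show t * (δ * Md t) = δ * (t * Md t) by ring, hcross,
            mul_div_cancel₀ _ ht.ne', hmδ]
          ring
        have h2 : t * y' t < 0 := by
          rw [h1]
          exact mul_neg_of_pos_of_neg hMt hψ
        by_contra h3
        push_neg at h3
        nlinarith [mul_nonneg ht.le h3]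
      have hy₀ : 0 ≤ y t₀ := by
        simp only [hydef]
        rw [hZdef, lt_div_iff₀ hM₀] at hδZ
        linarith
      have hlow : ∀ t : ℝ, 0 < t → t ≤ t₀ → 0 ≤ y t := fun t h1 h2 =>
        cross_neg y y' hyd hyneg t₀ t h1 h2 hy₀
      set ρ := alam * ((δ - 1)/δ) with hρdef
      have hρ : 0 < ρ := mul_pos hα (div_pos (by linarith) hδ0)
      apply no_log_decay m (fun t => alam * (M t - m t) / t)
        (fun t ht => hm' t ht) t₀ ρ C ht₀ hρ ?_ ?_
      · intro t ht hle
        have hy := hlow t ht hle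
        have hm1 := hm_ge1 t ht
        simp only [hydef] at hy
        have key : M t - m t ≤ (1-δ)/δ := by
          rw [le_div_iff₀ hδ0]
          nlinarith
        have h6 : alam * (M t - m t) ≤ -ρ := by
          have := mul_le_mul_of_nonneg_left key hα.le
          have hr : alam * ((1-δ)/δ) = -ρ := by rw [hρdef]; ring
          linarith
        have h7 : alam * (M t - m t) / t ≤ (-ρ) / t :=
          (div_le_div_iff_of_pos_right ht).mpr h6
        rw [neg_div] at h7 ⊢
        linarith
      · intro t ht _
        exact hm_leC t ht
  -- conclusion
  have hm'0 : ∀ t : ℝ, 0 < t → HasDerivAt m 0 t := by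
    intro t ht
    have h1 := hm' t ht
    have h2 : alam * (M t - m t) / t = 0 := by
      rw [← hMm t ht]
      simp
    rwa [h2] at h1
  have hmconst : ∀ t : ℝ, 0 < t → m t = m 1 := by
    intro t ht
    rcases le_total t 1 with h | h
    · exact (const_on_of_deriv_zero m t 1 h
        (fun x hx => hm'0 x (lt_of_lt_of_le ht hx.1))).symm
    · exact const_on_of_deriv_zero m 1 t h
        (fun x hx => hm'0 x (lt_of_lt_of_le one_pos hx.1))
  refine ⟨m 1, ⟨hm_ge1 1 one_pos, hm_leC 1 one_pos⟩, ?_⟩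
  intro t ht
  have h1 : m t = m 1 := hmconst t ht
  have h2 : w t = m t * t ^ alam := by
    simp only [hmdef]
    rw [Real.rpow_neg ht.le]
    have htα : (0:ℝ) < t ^ alam := Real.rpow_pos_of_pos ht _
    field_simp
  rw [h2, h1]
end

section
/- Let λ ∈ (0, λ_max) and let w : (0,∞) → ℝ be a positive C¹ function with w′ ≥ 0, such that t ↦ t^(p−n)·(w′(t))^(p−1) is differentiable on (0,∞) and −tⁿ·(d/dt)(t^(p−n)·(w′(t))^(p−1)) = λ·w(t)^(p−1) for all t > 0. Assume there are constants C ≥ 1 and A > 0 with t^(α_λ) ≤ w(t) ≤ C·t^(α_λ) and t·w′(t) ≤ A·w(t) for all t > 0. Then w′(t) ≥ α_λ·t^(α_λ − 1) for all t > 0; in particular 0 < inf_{t>0} t·w′(t)/w(t) ≤ sup_{t>0} t·w′(t)/w(t) < ∞. -/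
open Real

theorem stmt11 (n : ℕ) (hn : 2 ≤ n) (p : ℝ) (hp1 : 1 < p) (hpn : p < n)
    (lam : ℝ) (hlam0 : 0 < lam) (hlam1 : lam < (((n : ℝ) - 1) / p) ^ p)
    (alam : ℝ) (ha1 : ((n : ℝ) - 1) / p < alam) (ha2 : alam ≤ ((n : ℝ) - 1) / (p - 1))
    (ha : alam ^ (p - 1) * ((n : ℝ) - 1 - (p - 1) * alam) = lam)
    (w w' : ℝ → ℝ)
    (hderiv : ∀ t : ℝ, 0 < t → HasDerivAt w (w' t) t)
    (hw'cont : ContinuousOn w' (Set.Ioi 0))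
    (hwpos : ∀ t : ℝ, 0 < t → 0 < w t)
    (hw'0 : ∀ t : ℝ, 0 < t → 0 ≤ w' t)
    (hODE : ∀ t : ℝ, 0 < t → ∃ d : ℝ,
      HasDerivAt (fun s : ℝ => s ^ (p - (n : ℝ)) * w' s ^ (p - 1)) d t ∧
      -(t ^ n) * d = lam * w t ^ (p - 1))
    (C : ℝ) (hC : 1 ≤ C)
    (hbd : ∀ t : ℝ, 0 < t → t ^ alam ≤ w t ∧ w t ≤ C * t ^ alam)
    (A : ℝ) (hA : 0 < A)
    (hgrad : ∀ t : ℝ, 0 < t → t * w' t ≤ A * w t) :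
    (∀ t : ℝ, 0 < t → alam * t ^ (alam - 1) ≤ w' t) ∧
    (∃ a b : ℝ, 0 < a ∧ ∀ t : ℝ, 0 < t →
      a ≤ t * w' t / w t ∧ t * w' t / w t ≤ b) := by
  have hp0 : (0:ℝ) < p - 1 := by linarith
  have hn1 : (0:ℝ) < (n:ℝ) - 1 := by
    have : (2:ℝ) ≤ n := by exact_mod_cast hn
    linarith
  have halam0 : 0 < alam := lt_trans (div_pos hn1 (by linarith)) ha1
  -- n - 1 - (p-1)*alam > 0
  have hmneg : 0 < (n:ℝ) - 1 - (p - 1) * alam := by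
    by_contra h
    push_neg at h
    have h1 : (0:ℝ) < alam ^ (p - 1) := Real.rpow_pos_of_pos halam0 _
    nlinarith [mul_nonpos_of_nonneg_of_nonpos h1.le h]
  set m : ℝ := (p - 1) * alam - ((n:ℝ) - 1) with hm_def
  have hm : m < 0 := by simp only [hm_def]; linarith
  have hmne : m ≠ 0 := ne_of_lt hm
  -- lam = alam^(p-1) * (-m)
  have hlam_eq : alam ^ (p - 1) * (-m) = lam := by
    rw [← ha, hm_def]; ring_nf
  -- the auxiliary function φ
  set g : ℝ → ℝ := fun s => s ^ (p - (n:ℝ)) * w' s ^ (p - 1) with hg_def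
  set φ : ℝ → ℝ := fun s => g s + (lam / m) * s ^ m with hφ_def
  set φ' : ℝ → ℝ := fun s => -(lam * w s ^ (p - 1)) / s ^ n + lam * s ^ (m - 1) with hφ'_def
  have hφderiv : ∀ t : ℝ, 0 < t → HasDerivAt φ (φ' t) t := by
    intro t ht
    obtain ⟨d, hd, hde⟩ := hODE t ht
    have htn : (t:ℝ) ^ n ≠ 0 := pow_ne_zero _ (ne_of_gt ht)
    have hdval : d = -(lam * w t ^ (p - 1)) / t ^ n := by
      field_simp
      linarith [hde]
    have h2 : HasDerivAt (fun s : ℝ => (lam / m) * s ^ m) ((lam / m) * (m * t ^ (m - 1))) t :=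
      (Real.hasDerivAt_rpow_const (Or.inl (ne_of_gt ht))).const_mul _
    have := hd.add h2
    refine this.congr_deriv ?_
    rw [hφ'_def, hdval]
    field_simp
  have hφcont : ContinuousOn φ (Set.Ioi (0:ℝ)) := by
    intro x hx
    exact ((hφderiv x hx).continuousAt).continuousWithinAt
  have hφ'le : ∀ x ∈ Set.Ioi (0:ℝ), φ' x ≤ 0 := by
    intro x hx
    have hx0 : (0:ℝ) < x := hx
    have hxn : (0:ℝ) < x ^ n := pow_pos hx0 n
    -- x^(alam) ≤ w x , so x^(alam*(p-1)) ≤ w x ^ (p-1)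
    have h1 : x ^ (alam * (p - 1)) ≤ w x ^ (p - 1) := by
      rw [Real.rpow_mul hx0.le]
      exact Real.rpow_le_rpow (Real.rpow_nonneg hx0.le _) (hbd x hx0).1 hp0.le
    have hxn' : (x:ℝ) ^ n = x ^ ((n:ℝ)) := (Real.rpow_natCast x n).symm
    have h2 : x ^ (m - 1) = x ^ (alam * (p - 1)) / x ^ n := by
      rw [hxn', ← Real.rpow_sub hx0]
      congr 1
      simp only [hm_def]; ring
    have h3 : x ^ (m - 1) ≤ w x ^ (p - 1) / x ^ n := by
      rw [h2]
      exact div_le_div_of_nonneg_right h1 hxn.le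
    simp only [hφ'_def]
    have : lam * x ^ (m - 1) ≤ lam * (w x ^ (p - 1) / x ^ n) :=
      mul_le_mul_of_nonneg_left h3 hlam0.le
    have heq : -(lam * w x ^ (p - 1)) / x ^ n = -(lam * (w x ^ (p - 1) / x ^ n)) := by ring
    rw [heq]
    linarith
  have hanti : AntitoneOn φ (Set.Ioi (0:ℝ)) := by
    apply antitoneOn_of_hasDerivWithinAt_nonpos (convex_Ioi 0) hφcont
    · intro x hx
      rw [interior_Ioi] at hx
      exact ((hφderiv x hx).hasDerivWithinAt)
    · intro x hx
      rw [interior_Ioi] at hx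
      exact hφ'le x hx
  -- key bound: g t ≥ alam^(p-1) * t^m
  have hkey : ∀ t : ℝ, 0 < t → alam ^ (p - 1) * t ^ m ≤ g t := by
    intro t ht
    -- for T ≥ t, φ t ≥ φ T ≥ (lam/m) * T^m, so g t ≥ (lam/m)*T^m - (lam/m)*t^m
    have hev : ∀ᶠ T in Filter.atTop, (lam / m) * T ^ m - (lam / m) * t ^ m ≤ g t := by
      filter_upwards [Filter.eventually_ge_atTop t] with T hT
      have hT0 : (0:ℝ) < T := lt_of_lt_of_le ht hT
      have h1 : φ T ≤ φ t := hanti (Set.mem_Ioi.2 ht) (Set.mem_Ioi.2 hT0) hT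
      have h2 : 0 ≤ g T :=
        mul_nonneg (Real.rpow_nonneg hT0.le _) (Real.rpow_nonneg (hw'0 T hT0) _)
      simp only [hφ_def] at h1
      linarith
    have hlim : Filter.Tendsto (fun T : ℝ => (lam / m) * T ^ m - (lam / m) * t ^ m)
        Filter.atTop (nhds (alam ^ (p - 1) * t ^ m)) := by
      have h0 : Filter.Tendsto (fun T : ℝ => T ^ m) Filter.atTop (nhds 0) := by
        have := tendsto_rpow_neg_atTop (y := -m) (by linarith)
        simpa using this
      have := ((h0.const_mul (lam / m)).sub_const ((lam / m) * t ^ m))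
      convert this using 2
      · rw [mul_zero, zero_sub]
        have : lam / m = -(alam ^ (p - 1)) := by
          field_simp
          linarith [hlam_eq]
        rw [this]; ring
    exact le_of_tendsto hlim hev
  -- first conclusion
  have main : ∀ t : ℝ, 0 < t → alam * t ^ (alam - 1) ≤ w' t := by
    intro t ht
    have hk := hkey t ht
    -- g t = t^(p-n) * w' t ^(p-1); multiply by t^(n-p)
    have htpn : (0:ℝ) < t ^ (p - (n:ℝ)) := Real.rpow_pos_of_pos ht _
    have h1 : alam ^ (p - 1) * t ^ ((alam - 1) * (p - 1)) ≤ w' t ^ (p - 1) := by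
      have h2 : t ^ m / t ^ (p - (n:ℝ)) = t ^ ((alam - 1) * (p - 1)) := by
        rw [← Real.rpow_sub ht]
        congr 1
        simp only [hm_def]; ring
      have h3 : alam ^ (p-1) * t ^ m / t ^ (p - (n:ℝ)) ≤ g t / t ^ (p - (n:ℝ)) :=
        div_le_div_of_nonneg_right hk htpn.le
      rw [hg_def] at h3
      simp only [mul_div_assoc] at h3
      rw [h2] at h3
      have h4 : t ^ (p - (n:ℝ)) * w' t ^ (p - 1) / t ^ (p - (n:ℝ)) = w' t ^ (p - 1) := by
        field_simp
      calc alam ^ (p - 1) * t ^ ((alam - 1) * (p - 1)) ≤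
            t ^ (p - (n:ℝ)) * w' t ^ (p - 1) / t ^ (p - (n:ℝ)) := by
              simpa [mul_div_assoc] using h3
        _ = w' t ^ (p - 1) := h4
    have h5 : (alam * t ^ (alam - 1)) ^ (p - 1) ≤ w' t ^ (p - 1) := by
      rw [Real.mul_rpow halam0.le (Real.rpow_nonneg ht.le _), ← Real.rpow_mul ht.le]
      exact h1
    by_contra hcon
    push_neg at hcon
    have h6 : w' t ^ (p - 1) < (alam * t ^ (alam - 1)) ^ (p - 1) :=
      Real.rpow_lt_rpow (hw'0 t ht) hcon hp0
    linarith
  refine ⟨main, alam / C, A, div_pos halam0 (by linarith), ?_⟩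
  intro t ht
  have hwt : 0 < w t := hwpos t ht
  have hta : (0:ℝ) < t ^ alam := Real.rpow_pos_of_pos ht _
  constructor
  · have h1 : alam * t ^ alam ≤ t * w' t := by
      have hmono := mul_le_mul_of_nonneg_left (main t ht) ht.le
      have htt : t * t ^ (alam - 1) = t ^ alam := by
        have h := Real.rpow_add ht 1 (alam - 1)
        rw [Real.rpow_one] at h
        rw [show (1:ℝ) + (alam - 1) = alam by ring] at h
        exact h.symm
      calc alam * t ^ alam = t * (alam * t ^ (alam - 1)) := by rw [← htt]; ring
        _ ≤ t * w' t := hmono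
    have h2 : alam / C ≤ alam * t ^ alam / w t := by
      have hCt : 0 < C * t ^ alam := mul_pos (by linarith) hta
      have : alam * t ^ alam / (C * t ^ alam) ≤ alam * t ^ alam / w t :=
        div_le_div_of_nonneg_left (mul_nonneg halam0.le hta.le) hwt (hbd t ht).2
      calc alam / C = alam * t ^ alam / (C * t ^ alam) := by
            field_simp
        _ ≤ alam * t ^ alam / w t := this
    exact le_trans h2 (div_le_div_of_nonneg_right h1 hwt.le)
  · rw [div_le_iff₀ hwt]
    exact hgrad t ht
end

section
/- Let n ≥ 2 be an integer, p real with 1 < p < n, p* = np/(n−p). Let u : [0,∞) → ℝ be a C¹ function with u > 0 on [0,∞), u′(0) = 0, u′ < 0 on (0,∞), such that t ↦ (sinh t)^(n−1)|u′(t)|^(p−2)u′(t) is differentiable on (0,∞) and ( (sinh t)^(n−1) |u′(t)|^(p−2) u′(t) )′ + (sinh t)^(n−1) u(t)^(p*−1) = 0 for all t > 0. Then for every R > 0 the Pohozaev identity holds: ((p−n)/p) · ∫₀^R ( |u′(t)|^p − u(t)^(p*) ) (sinh t)^(n−1) cosh t dt = [ ((p−1)/p)·|u′(R)|^p + (1/p*)·u(R)^(p*)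 ] · (sinh R)ⁿ. -/
open Real MeasureTheory

private lemma neg_w_eq (p : ℝ) {x : ℝ} (hx : x < 0) :
    -(|x| ^ (p - 2) * x) = (-x) ^ (p - 1) := by
  have hb : (0 : ℝ) < -x := neg_pos.2 hx
  rw [abs_of_neg hx]
  have := Real.rpow_add_one hb.ne' (p - 2)
  rw [show p - 2 + 1 = p - 1 by ring] at this
  rw [this]; ring

private lemma neg_w_rpow (p : ℝ) (hp1 : 1 < p) {x : ℝ} (hx : x < 0) :
    (-(|x| ^ (p - 2) * x)) ^ (p / (p - 1)) = |x| ^ p := by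
  have hb : (0 : ℝ) < -x := neg_pos.2 hx
  rw [neg_w_eq p hx, ← Real.rpow_mul hb.le, abs_of_neg hx]
  congr 1
  field_simp
  exact div_self (by linarith : (0:ℝ) < p - 1).ne'

theorem stmt16 (n : ℕ) (hn : 2 ≤ n) (p : ℝ) (hp1 : 1 < p) (hpn : p < n)
    (u u' : ℝ → ℝ)
    (hupos : ∀ t : ℝ, 0 ≤ t → 0 < u t)
    (hderiv : ∀ t : ℝ, 0 < t → HasDerivAt u (u' t) t)
    (hderiv0 : HasDerivWithinAt u (u' 0) (Set.Ici 0) 0)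
    (hu'cont : ContinuousOn u' (Set.Ici 0))
    (hu'0 : u' 0 = 0)
    (hu'neg : ∀ t : ℝ, 0 < t → u' t < 0)
    (hODE : ∀ t : ℝ, 0 < t →
      HasDerivAt (fun s : ℝ => Real.sinh s ^ (n - 1) * |u' s| ^ (p - 2) * u' s)
        (-(Real.sinh t ^ (n - 1) * u t ^ ((n : ℝ) * p / ((n : ℝ) - p) - 1))) t)
    :
    ∀ R : ℝ, 0 < R →
      (p - (n : ℝ)) / p *
          ∫ t in (0 : ℝ)..R,
            (|u' t| ^ p - u t ^ ((n : ℝ) * p / ((n : ℝ) - p))) *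
              Real.sinh t ^ (n - 1) * Real.cosh t
      = ((p - 1) / p * |u' R| ^ p +
            1 / ((n : ℝ) * p / ((n : ℝ) - p)) * u R ^ ((n : ℝ) * p / ((n : ℝ) - p))) *
          Real.sinh R ^ n := by
  intro R hR
  have hp0 : (0:ℝ) < p := lt_trans one_pos hp1
  have hp1' : p - 1 ≠ 0 := by linarith
  have hn2 : (2:ℝ) ≤ (n:ℝ) := by exact_mod_cast hn
  have hnp : (0:ℝ) < (n:ℝ) - p := by linarith
  set q : ℝ := (n : ℝ) * p / ((n : ℝ) - p) with hqdef
  have hq0 : 0 < q := div_pos (by positivity) hnp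
  -- continuity of u on Ici 0
  have hucont : ContinuousOn u (Set.Ici 0) := by
    intro x hx
    rcases eq_or_lt_of_le (Set.mem_Ici.mp hx) with h | h
    · rw [← h]; exact hderiv0.continuousWithinAt
    · exact ((hderiv x h).continuousAt).continuousWithinAt
  set G : ℝ → ℝ := fun t =>
    ((p - 1) / p * |u' t| ^ p + 1 / q * u t ^ q) * Real.sinh t ^ n with hGdef
  set g : ℝ → ℝ := fun t =>
    (p - (n:ℝ)) / p * ((|u' t| ^ p - u t ^ q) * Real.sinh t ^ (n-1) * Real.cosh t) with hgdef
  have hG0 : G 0 = 0 := by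
    simp [hGdef, Real.sinh_zero, zero_pow (by omega : n ≠ 0)]
  have hIcc : Set.Icc (0:ℝ) R ⊆ Set.Ici 0 := fun x hx => hx.1
  have habsp : ContinuousOn (fun t => |u' t| ^ p) (Set.Icc 0 R) :=
    ((hu'cont.mono hIcc).abs).rpow_const (fun x _ => Or.inr hp0.le)
  have huq : ContinuousOn (fun t => u t ^ q) (Set.Icc 0 R) :=
    (hucont.mono hIcc).rpow_const (fun x hx => Or.inl (hupos x hx.1).ne')
  have hGc : ContinuousOn G (Set.Icc 0 R) := by
    rw [hGdef]
    exact ((continuousOn_const.mul habsp).add (continuousOn_const.mul huq)).mul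
      ((Real.continuous_sinh.continuousOn).pow n)
  have hgint : IntervalIntegrable g volume 0 R := by
    apply ContinuousOn.intervalIntegrable
    rw [hgdef, Set.uIcc_of_le hR.le]
    exact continuousOn_const.mul
      (((habsp.sub huq).mul ((Real.continuous_sinh.continuousOn).pow _)).mul
        Real.continuous_cosh.continuousOn)
  have hGd : ∀ x ∈ Set.Ioo (0:ℝ) R, HasDerivWithinAt G (g x) (Set.Ioi x) x := by
    intro t ht
    have ht0 : 0 < t := ht.1
    have hS1 : 0 < Real.sinh t := Real.sinh_pos_iff.2 ht0
    have hb : 0 < -u' t := neg_pos.2 (hu'neg t ht0)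
    have hv : 0 < u t := hupos t ht0.le
    have habs : |u' t| = -u' t := abs_of_neg (hu'neg t ht0)
    have hwt : |u' t| ^ (p-2) * u' t = -((-u' t) ^ (p-1)) := by
      have h := neg_w_eq p (hu'neg t ht0); linarith
    have hSm : Real.sinh t ^ (n-1) ≠ 0 := pow_ne_zero _ hS1.ne'
    have hSpow : HasDerivAt (fun s => Real.sinh s ^ (n-1))
        (((n-1:ℕ):ℝ) * Real.sinh t ^ (n-2) * Real.cosh t) t := by
      have h := (Real.hasDerivAt_sinh t).fun_pow (n-1)
      simpa [show n-1-1 = n-2 from by omega] using h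
    have hwdiv := (hODE t ht0).div hSpow hSm
    have hev : (fun s => |u' s| ^ (p-2) * u' s) =ᶠ[nhds t]
        (fun s => (Real.sinh s ^ (n-1) * |u' s| ^ (p-2) * u' s) / (Real.sinh s ^ (n-1))) := by
      filter_upwards [isOpen_Ioi.mem_nhds ht0] with s hs
      have hne : Real.sinh s ^ (n-1) ≠ 0 := pow_ne_zero _ (Real.sinh_pos_iff.2 hs).ne'
      rw [mul_assoc, mul_div_cancel_left₀ _ hne]
    have hW : HasDerivAt (fun s => |u' s| ^ (p-2) * u' s)
        (-(u t ^ (q-1)) - ((n:ℝ)-1) * Real.cosh t / Real.sinh t * (|u' t| ^ (p-2) * u' t)) t := by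
      have h := hwdiv.congr_of_eventuallyEq hev
      refine h.congr_deriv ?_; symm
      have h1 : Real.sinh t ^ (n-1) = Real.sinh t ^ (n-2) * Real.sinh t := by
        rw [← pow_succ]; congr 1; omega
      have h2 : ((n-1:ℕ):ℝ) = (n:ℝ) - 1 := Nat.cast_pred (by omega)
      rw [h2, h1]
      field_simp
    have hneg : -(|u' t| ^ (p-2) * u' t) ≠ 0 := by
      rw [hwt, neg_neg]
      exact (Real.rpow_pos_of_pos hb _).ne'
    have hphi0 := (hW.neg.rpow_const (p := p/(p-1)) (Or.inl hneg))
    have hevp : (fun s => |u' s| ^ p) =ᶠ[nhds t]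
        (fun s => (-(|u' s| ^ (p-2) * u' s)) ^ (p/(p-1))) := by
      filter_upwards [isOpen_Ioi.mem_nhds ht0] with s hs
      exact (neg_w_rpow p hp1 (hu'neg s hs)).symm
    have hphi := hphi0.congr_of_eventuallyEq hevp
    have hr : (-(|u' t| ^ (p-2) * u' t)) ^ (p/(p-1) - 1) = -u' t := by
      rw [hwt, neg_neg, ← Real.rpow_mul hb.le,
        show (p-1) * (p/(p-1) - 1) = 1 by field_simp; ring, Real.rpow_one]
    have hU : HasDerivAt (fun s => u s ^ q) (u' t * q * u t ^ (q-1)) t :=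
      (hderiv t ht0).rpow_const (Or.inl hv.ne')
    have hSn : HasDerivAt (fun s => Real.sinh s ^ n)
        ((n:ℝ) * Real.sinh t ^ (n-1) * Real.cosh t) t :=
      (Real.hasDerivAt_sinh t).pow n
    have hcomb := ((hphi.const_mul ((p-1)/p)).add (hU.const_mul (1/q))).mul hSn
    have hbp : (-u' t) ^ p = (-u' t) ^ (p-1) * (-u' t) := by
      have h := Real.rpow_add_one hb.ne' (p-1)
      rw [sub_add_cancel] at h
      exact h
    have hSn1 : Real.sinh t ^ n = Real.sinh t ^ (n-1) * Real.sinh t := by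
      rw [← pow_succ]; congr 1; omega
    have hval : ((p-1)/p * (-(-(u t ^ (q-1)) - ((n:ℝ)-1) * Real.cosh t / Real.sinh t *
          (|u' t| ^ (p-2) * u' t)) * (p/(p-1)) *
          (-(|u' t| ^ (p-2) * u' t)) ^ (p/(p-1) - 1))
        + 1/q * (u' t * q * u t ^ (q-1))) * Real.sinh t ^ n
        + ((p-1)/p * |u' t| ^ p + 1/q * u t ^ q) *
          ((n:ℝ) * Real.sinh t ^ (n-1) * Real.cosh t) = g t := by
      simp only [hgdef]
      rw [hr, hwt, habs, hbp, hSn1]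
      have hut : u' t = -(-u' t) := by ring
      rw [hut]
      generalize u t ^ (q-1) = X
      generalize u t ^ q = Y
      generalize (-u' t) ^ (p-1) = B
      rw [hqdef]
      field_simp
      ring
    replace hcomb := hcomb.congr_deriv hval
    exact hcomb.hasDerivWithinAt
  have hFTC : (∫ s in (0:ℝ)..R, g s) = G R - G 0 :=
    intervalIntegral.integral_eq_sub_of_hasDeriv_right_of_le hR.le hGc hGd hgint
  rw [hG0, sub_zero] at hFTC
  have hFTC' : (∫ t in (0:ℝ)..R, (p - (n:ℝ))/p *
      ((|u' t| ^ p - u t ^ q) * Real.sinh t ^ (n-1) * Real.cosh t)) = G R := hFTC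
  rw [← intervalIntegral.integral_const_mul, hFTC', hGdef]
end

section
/- Let n ≥ 2 be an integer, p real with 1 < p < n, p* = np/(n−p). Let u : [0,∞) → ℝ be a C¹ function with u > 0 on [0,∞), u′(0) = 0, u′ < 0 on (0,∞), such that t ↦ (sinh t)^(n−1)|u′(t)|^(p−2)u′(t) is differentiable on (0,∞) and ( (sinh t)^(n−1) |u′(t)|^(p−2) u′(t) )′ + (sinh t)^(n−1) u(t)^(p*−1) = 0 for all t > 0. Then for every R > 0, ∫₀^R ( u(t)^(p*) − |u′(t)|^p ) (sinh t)^(n−1) cosh t dt = ∫₀^R |u′(t)|^(p−2) u′(t) u(t) (sinh t)ⁿ dt + |u′(R)|^(p−1) u(R) (sinh R)^(n−1) cosh R. -/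
open Real MeasureTheory

theorem stmt17 (n : ℕ) (hn : 2 ≤ n) (p : ℝ) (hp1 : 1 < p) (hpn : p < n)
    (u u' : ℝ → ℝ)
    (hupos : ∀ t : ℝ, 0 ≤ t → 0 < u t)
    (hderiv : ∀ t : ℝ, 0 < t → HasDerivAt u (u' t) t)
    (hderiv0 : HasDerivWithinAt u (u' 0) (Set.Ici 0) 0)
    (hu'cont : ContinuousOn u' (Set.Ici 0))
    (hu'0 : u' 0 = 0)
    (hu'neg : ∀ t : ℝ, 0 < t → u' t < 0)
    (hODE : ∀ t : ℝ, 0 < t →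
      HasDerivAt (fun s : ℝ => Real.sinh s ^ (n - 1) * |u' s| ^ (p - 2) * u' s)
        (-(Real.sinh t ^ (n - 1) * u t ^ ((n : ℝ) * p / ((n : ℝ) - p) - 1))) t)
    :
    ∀ R : ℝ, 0 < R →
      (∫ t in (0 : ℝ)..R,
        (u t ^ ((n : ℝ) * p / ((n : ℝ) - p)) - |u' t| ^ p) *
          Real.sinh t ^ (n - 1) * Real.cosh t)
      = (∫ t in (0 : ℝ)..R, |u' t| ^ (p - 2) * u' t * u t * Real.sinh t ^ n)
        + |u' R| ^ (p - 1) * u R * Real.sinh R ^ (n - 1) * Real.cosh R := by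
  have hp0 : (0:ℝ) < p - 1 := by linarith
  obtain ⟨m, rfl⟩ : ∃ m, n = m + 1 := ⟨n - 1, by omega⟩
  intro R hR
  set q : ℝ := ((m+1 : ℕ):ℝ) * p / (((m+1 : ℕ):ℝ) - p) with hqdef
  have hucont : ContinuousOn u (Set.Ici 0) := by
    intro t ht
    rcases eq_or_lt_of_le (Set.mem_Ici.mp ht) with h0 | h0
    · rw [← h0]; exact hderiv0.continuousWithinAt
    · exact ((hderiv t h0).continuousAt).continuousWithinAt
  have habs : ∀ t : ℝ, 0 ≤ t → |u' t| ^ (p-2) * u' t = -(|u' t| ^ (p-1)) := by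
    intro t ht
    rcases eq_or_lt_of_le ht with h0 | h0
    · rw [← h0, hu'0, abs_zero, Real.zero_rpow hp0.ne']
      ring
    · have hneg := hu'neg t h0
      have habs' : |u' t| = -u' t := abs_of_neg hneg
      have hpos : 0 < |u' t| := by rw [habs']; linarith
      have h1 : |u' t| ^ (p-1) = |u' t| ^ (p-2) * |u' t| := by
        have h := Real.rpow_add hpos (p-2) 1
        rw [show p - 2 + 1 = p - 1 by ring] at h
        simpa [Real.rpow_one] using h
      rw [h1, habs']; ring
  have habsp : ∀ t : ℝ, 0 < t → |u' t| ^ p = |u' t| ^ (p-2) * (u' t * u' t) := by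
    intro t h0
    have hneg := hu'neg t h0
    have hpos : 0 < |u' t| := abs_pos.mpr hneg.ne
    have h := Real.rpow_add hpos (p-2) 2
    rw [show p - 2 + 2 = p by ring] at h
    rw [h, show ((2:ℝ)) = ((2:ℕ):ℝ) by norm_num, Real.rpow_natCast, sq_abs, sq]
  have huq : ∀ t : ℝ, 0 ≤ t → u t ^ q = u t ^ (q - 1) * u t := by
    intro t ht
    have h := Real.rpow_add (hupos t ht) (q-1) 1
    rw [show q - 1 + 1 = q by ring] at h
    simpa [Real.rpow_one] using h
  set F : ℝ → ℝ := fun s => (Real.sinh s ^ (m+1-1) * |u' s| ^ (p-2) * u' s) * (u s * Real.cosh s) with hF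
  set f' : ℝ → ℝ := fun t =>
    -((u t ^ q - |u' t| ^ p) * Real.sinh t ^ (m+1-1) * Real.cosh t
      - |u' t| ^ (p-2) * u' t * u t * Real.sinh t ^ (m+1)) with hf'
  have hFderiv : ∀ t ∈ Set.Ioo (0:ℝ) R, HasDerivAt F (f' t) t := by
    intro t ht
    have h1 := (hODE t ht.1).mul ((hderiv t ht.1).mul (Real.hasDerivAt_cosh t))
    convert h1 using 1
    case e'_4 => exact rfl
    case e'_5 => exact rfl
    case e'_8 => exact rfl
    rw [hf']
    simp only [Nat.add_sub_cancel, pow_succ, Pi.mul_apply]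
    rw [huq t ht.1.le, habsp t ht.1]
    ring
  have hcontFc : ContinuousOn (fun s => Real.sinh s ^ (m+1-1) * (-(|u' s| ^ (p-1))) * (u s * Real.cosh s)) (Set.Icc 0 R) := by
    have h1 : Continuous fun x : ℝ => |x| ^ (p-1) := by
      apply continuous_iff_continuousAt.mpr
      intro x
      exact (Real.continuousAt_rpow_const _ _ (Or.inr hp0.le)).comp continuous_abs.continuousAt
    exact ((Real.continuous_sinh.pow _).continuousOn.mul
      ((h1.comp_continuousOn (hu'cont.mono (Set.Icc_subset_Ici_self))).neg)).mul
      ((hucont.mono Set.Icc_subset_Ici_self).mul Real.continuous_cosh.continuousOn)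
  have hFcont : ContinuousOn F (Set.Icc 0 R) := by
    apply hcontFc.congr
    intro t ht
    simp only [hF]
    linear_combination (Real.sinh t ^ (m + 1 - 1) * (u t * Real.cosh t)) * habs t ht.1
  have hGc : ContinuousOn (fun t => (u t ^ q - |u' t| ^ p) * Real.sinh t ^ (m+1-1) * Real.cosh t) (Set.Icc 0 R) := by
    have h1 : ContinuousOn (fun t => u t ^ q) (Set.Icc 0 R) :=
      (hucont.mono Set.Icc_subset_Ici_self).rpow_const
        (fun t ht => Or.inl (hupos t ht.1).ne')
    have h2 : ContinuousOn (fun t => |u' t| ^ p) (Set.Icc 0 R) :=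
      ((hu'cont.mono Set.Icc_subset_Ici_self).abs).rpow_const
        (fun t _ => Or.inr (by linarith))
    exact ((h1.sub h2).mul (Real.continuous_sinh.pow _).continuousOn).mul Real.continuous_cosh.continuousOn
  have hHc : ContinuousOn (fun t => |u' t| ^ (p-2) * u' t * u t * Real.sinh t ^ (m+1)) (Set.Icc 0 R) := by
    have h1 : ContinuousOn (fun t => -(|u' t| ^ (p-1))) (Set.Icc 0 R) :=
      (((hu'cont.mono Set.Icc_subset_Ici_self).abs).rpow_const
        (fun t _ => Or.inr (by linarith))).neg
    have h2 : ContinuousOn (fun t => -(|u' t| ^ (p-1)) * u t * Real.sinh t ^ (m+1)) (Set.Icc 0 R) :=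
      (h1.mul (hucont.mono Set.Icc_subset_Ici_self)).mul (Real.continuous_sinh.pow _).continuousOn
    apply h2.congr
    intro t ht
    simp only
    linear_combination (u t * Real.sinh t ^ (m + 1)) * habs t ht.1
  have hf'c : ContinuousOn f' (Set.Icc 0 R) := (hGc.sub hHc).neg
  have hIG : IntervalIntegrable (fun t => (u t ^ q - |u' t| ^ p) * Real.sinh t ^ (m+1-1) * Real.cosh t) volume 0 R :=
    (hGc.mono (by rw [Set.uIcc_of_le hR.le])).intervalIntegrable
  have hIH : IntervalIntegrable (fun t => |u' t| ^ (p-2) * u' t * u t * Real.sinh t ^ (m+1)) volume 0 R :=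
    (hHc.mono (by rw [Set.uIcc_of_le hR.le])).intervalIntegrable
  have hIf' : IntervalIntegrable f' volume 0 R :=
    (hf'c.mono (by rw [Set.uIcc_of_le hR.le])).intervalIntegrable
  have hFTC : ∫ t in (0:ℝ)..R, f' t = F R - F 0 :=
    intervalIntegral.integral_eq_sub_of_hasDeriv_right_of_le hR.le hFcont
      (fun t ht => (hFderiv t ht).hasDerivWithinAt) hIf'
  have hF0 : F 0 = 0 := by
    simp [hF, hu'0]
  have hFR : F R = -(|u' R| ^ (p-1) * u R * Real.sinh R ^ (m+1-1) * Real.cosh R) := by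
    simp only [hF]
    linear_combination (Real.sinh R ^ (m + 1 - 1) * (u R * Real.cosh R)) * habs R hR.le
  have hsplit : (∫ t in (0:ℝ)..R, f' t)
      = -((∫ t in (0:ℝ)..R, (u t ^ q - |u' t| ^ p) * Real.sinh t ^ (m+1-1) * Real.cosh t)
        - ∫ t in (0:ℝ)..R, |u' t| ^ (p-2) * u' t * u t * Real.sinh t ^ (m+1)) := by
    rw [← intervalIntegral.integral_sub hIG hIH, ← intervalIntegral.integral_neg]
  rw [hFTC, hF0, hFR] at hsplit
  linarith [hsplit]
end

section
/- Let n ≥ 2 be an integer, p real with 1 < p < n, p* = np/(n−p). There is no C¹ function u : [0,∞) → ℝ with all of the following properties: u > 0 on [0,∞), u′(0) = 0, u′ < 0 on (0,∞); the function t ↦ (sinh t)^(n−1)|u′(t)|^(p−2)u′(t) is differentiable on (0,∞) with ( (sinh t)^(n−1) |u′(t)|^(p−2) u′(t) )′ + (sinh t)^(n−1) u(t)^(p*−1) = 0 for all t > 0; and there exist constants c, C > 0 such that for all t ≥ 1, c·e^(−((n−1)/(p−1))·t) ≤ u(t) ≤ C·e^(−((n−1)/(p−1))·t) and c·e^(−((n−1)/(p−1))·t)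 ≤ −u′(t) ≤ C·e^(−((n−1)/(p−1))·t). (Hence the critical equation −Δ_p^{ℍⁿ} u = u^(p*−1) with λ = 0 has no nontrivial nonnegative finite-energy radial solution.) -/
open Real MeasureTheory

set_option maxHeartbeats 2000000 in
theorem stmt18 (n : ℕ) (hn : 2 ≤ n) (p : ℝ) (hp1 : 1 < p) (hpn : p < n)
    (u u' : ℝ → ℝ)
    (hupos : ∀ t : ℝ, 0 ≤ t → 0 < u t)
    (hderiv : ∀ t : ℝ, 0 < t → HasDerivAt u (u' t) t)
    (hderiv0 : HasDerivWithinAt u (u' 0) (Set.Ici 0) 0)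
    (hu'cont : ContinuousOn u' (Set.Ici 0))
    (hu'0 : u' 0 = 0)
    (hu'neg : ∀ t : ℝ, 0 < t → u' t < 0)
    (hODE : ∀ t : ℝ, 0 < t →
      HasDerivAt (fun s : ℝ => Real.sinh s ^ (n - 1) * |u' s| ^ (p - 2) * u' s)
        (-(Real.sinh t ^ (n - 1) * u t ^ ((n : ℝ) * p / ((n : ℝ) - p) - 1))) t)
    (c C : ℝ) (hc : 0 < c) (hC : 0 < C)
    (hdecay : ∀ t : ℝ, 1 ≤ t →
      (c * Real.exp (-(((n : ℝ) - 1) / (p - 1)) * t) ≤ u t ∧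
        u t ≤ C * Real.exp (-(((n : ℝ) - 1) / (p - 1)) * t)) ∧
      (c * Real.exp (-(((n : ℝ) - 1) / (p - 1)) * t) ≤ -u' t ∧
        -u' t ≤ C * Real.exp (-(((n : ℝ) - 1) / (p - 1)) * t))) :
    False := by
  have hn' : (2:ℝ) ≤ (n:ℝ) := by exact_mod_cast hn
  have hp0 : (0:ℝ) < p := by linarith
  have hpm1 : (0:ℝ) < p - 1 := by linarith
  have hnp : (0:ℝ) < (n:ℝ) - p := by linarith
  set α : ℝ := ((n:ℝ) - 1) / (p - 1) with hαdef
  set pst : ℝ := (n:ℝ) * p / ((n:ℝ) - p) with hpstdef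
  set pp : ℝ := p / (p - 1) with hppdef
  set γ : ℝ := 1 - α with hγdef
  have hα : 0 < α := div_pos (by linarith) hpm1
  have hpstpos : 0 < pst := div_pos (mul_pos (by linarith) hp0) hnp
  have hpstp : p < pst := by
    have h : pst - p = p * p / ((n:ℝ) - p) := by rw [hpstdef]; field_simp; ring
    nlinarith [div_pos (mul_pos hp0 hp0) hnp]
  have hn1cast : ((n - 1 : ℕ) : ℝ) = (n:ℝ) - 1 := by
    rw [Nat.cast_sub (by omega)]; simp
  set w : ℝ → ℝ := fun s : ℝ => Real.sinh s ^ (n - 1) * |u' s| ^ (p - 2) * u' s with hwdef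
  have hv : ∀ t : ℝ, 0 < t → 0 < -u' t := fun t ht => neg_pos.2 (hu'neg t ht)
  have hw_eq : ∀ t : ℝ, 0 < t → w t = -(Real.sinh t ^ (n - 1) * ((-u' t) ^ (p - 1))) := by
    intro t ht
    have hvt := hv t ht
    have h1 : (-u' t) ^ (p - 1) = (-u' t) ^ (p - 2) * (-u' t) := by
      rw [show p - 1 = p - 2 + 1 by ring, Real.rpow_add_one hvt.ne']
    rw [hwdef]
    simp only
    rw [abs_of_neg (hu'neg t ht), h1]
    ring
  have hw_neg : ∀ t : ℝ, 0 < t → w t < 0 := by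
    intro t ht
    rw [hw_eq t ht]
    have hs : 0 < Real.sinh t := Real.sinh_pos_iff.2 ht
    have := Real.rpow_pos_of_pos (hv t ht) (p - 1)
    have h2 : 0 < Real.sinh t ^ (n - 1) := pow_pos hs _
    nlinarith
  set P : ℝ → ℝ := fun y : ℝ =>
    (p - 1) / p * (Real.sinh y ^ γ * (-w y) ^ pp) + Real.sinh y ^ n * u y ^ pst / pst +
      ((n:ℝ) - p) / p * (Real.cosh y * (w y * u y)) with hPdef
  have hder : ∀ t : ℝ, 0 < t → HasDerivAt P
      (-(((n:ℝ) - p) / p * (Real.sinh t * (Real.sinh t ^ (n - 1) * ((-u' t) ^ (p - 1) * u t))))) t := by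
    intro t ht
    have hs : 0 < Real.sinh t := Real.sinh_pos_iff.2 ht
    have hvt : 0 < -u' t := hv t ht
    have hu0 : 0 < u t := hupos t ht.le
    have hwneg := hw_neg t ht
    have hnw : (0:ℝ) < -w t := neg_pos.2 hwneg
    have hsα : (0:ℝ) < Real.sinh t ^ α := Real.rpow_pos_of_pos hs α
    have hA : HasDerivAt (fun y : ℝ => Real.sinh y ^ γ) (Real.cosh t * γ * Real.sinh t ^ (γ - 1)) t :=
      (Real.hasDerivAt_sinh t).rpow_const (Or.inl hs.ne')
    have hw' := hODE t ht
    have hB := (hw'.neg).rpow_const (p := pp) (Or.inl hnw.ne')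
    have hup := (hderiv t ht).rpow_const (p := pst) (Or.inl hu0.ne')
    have hsn := (Real.hasDerivAt_sinh t).pow n
    have h1 := (hA.mul hB).const_mul ((p - 1) / p)
    have h2 := (hsn.mul hup).div_const pst
    have h3 := ((Real.hasDerivAt_cosh t).mul (hw'.mul (hderiv t ht))).const_mul (((n:ℝ) - p) / p)
    have h := (h1.add h2).add h3
    rw [hPdef]
    refine h.congr_deriv ?_
    simp only [Pi.neg_apply, Pi.pow_apply, Pi.mul_apply]
    have hb1 : ((n - 1 : ℕ) : ℝ) * pp = ((n - 1 : ℕ) : ℝ) + α := by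
      rw [hn1cast, hppdef, hαdef]; field_simp; ring
    have hb2 : (p - 1) * pp = p - 1 + 1 := by rw [hppdef]; field_simp; ring
    have hb3 : ((n - 1 : ℕ) : ℝ) * (pp - 1) = α := by
      rw [hn1cast, hppdef, hαdef]; field_simp; ring
    have hb4 : (p - 1) * (pp - 1) = 1 := by rw [hppdef]; field_simp; ring
    have eX : (Real.sinh t ^ (n - 1) * (-u' t) ^ (p - 1)) ^ pp =
        Real.sinh t ^ (n - 1) * (Real.sinh t ^ α * ((-u' t) ^ (p - 1) * (-u' t))) := by
      rw [Real.mul_rpow (pow_pos hs _).le (Real.rpow_pos_of_pos hvt _).le,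
        ← Real.rpow_natCast (Real.sinh t) (n - 1), ← Real.rpow_mul hs.le, ← Real.rpow_mul hvt.le,
        hb1, Real.rpow_add hs, Real.rpow_natCast, hb2, Real.rpow_add hvt, Real.rpow_one]
      ring
    have eY : (Real.sinh t ^ (n - 1) * (-u' t) ^ (p - 1)) ^ (pp - 1) =
        Real.sinh t ^ α * (-u' t) := by
      rw [Real.mul_rpow (pow_pos hs _).le (Real.rpow_pos_of_pos hvt _).le,
        ← Real.rpow_natCast (Real.sinh t) (n - 1), ← Real.rpow_mul hs.le, ← Real.rpow_mul hvt.le,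
        hb3, hb4, Real.rpow_one]
    have eγ1 : Real.sinh t ^ (γ - 1) = (Real.sinh t ^ α)⁻¹ := by
      rw [show γ - 1 = -α by rw [hγdef]; ring, Real.rpow_neg hs.le]
    have eγ : Real.sinh t ^ γ = Real.sinh t * (Real.sinh t ^ α)⁻¹ := by
      rw [show γ = 1 + -α by rw [hγdef]; ring, Real.rpow_add hs, Real.rpow_one,
        Real.rpow_neg hs.le]
    have eN : Real.sinh t ^ n = Real.sinh t ^ (n - 1) * Real.sinh t := by
      conv_lhs => rw [show n = n - 1 + 1 by omega]
      rw [pow_succ]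
    have eU : u t ^ pst = u t ^ (pst - 1) * u t := by
      conv_lhs => rw [show pst = pst - 1 + 1 by ring]
      rw [Real.rpow_add_one hu0.ne']
    rw [hw_eq t ht]
    simp only [neg_neg]
    rw [eX, eY, eγ1, eγ, eN, eU, hγdef, hαdef, hppdef, hpstdef]
    field_simp
    ring
  have hPalt : ∀ t : ℝ, 0 < t → P t =
      (p - 1) / p * (Real.sinh t ^ n * (-u' t) ^ p) + Real.sinh t ^ n * u t ^ pst / pst +
        ((n:ℝ) - p) / p * (Real.cosh t * (-(Real.sinh t ^ (n - 1) * ((-u' t) ^ (p - 1) * u t)))) := by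
    intro t ht
    have hs : 0 < Real.sinh t := Real.sinh_pos_iff.2 ht
    have hvt : 0 < -u' t := hv t ht
    have e1 : Real.sinh t ^ γ * (Real.sinh t ^ (n - 1) * (-u' t) ^ (p - 1)) ^ pp =
        Real.sinh t ^ n * (-u' t) ^ p := by
      rw [Real.mul_rpow (pow_pos hs _).le (Real.rpow_pos_of_pos hvt _).le,
        ← Real.rpow_natCast (Real.sinh t) (n - 1), ← Real.rpow_mul hs.le, ← Real.rpow_mul hvt.le,
        show (p - 1) * pp = p by rw [hppdef]; field_simp,
        ← mul_assoc, ← Real.rpow_add hs,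
        show γ + ((n - 1 : ℕ) : ℝ) * pp = (n : ℝ) by
          rw [hn1cast, hγdef, hαdef, hppdef]; field_simp; ring,
        Real.rpow_natCast]
    rw [hPdef]
    simp only
    rw [hw_eq t ht]
    simp only [neg_neg]
    rw [e1]
    ring
  have hanti : StrictAntiOn P (Set.Ioi (0:ℝ)) := by
    apply strictAntiOn_of_deriv_neg (convex_Ioi 0)
    · exact fun x hx => ((hder x hx).continuousAt).continuousWithinAt
    · intro x hx
      rw [interior_Ioi] at hx
      rw [(hder x hx).deriv]
      have hs : 0 < Real.sinh x := Real.sinh_pos_iff.2 hx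
      have h1 : 0 < Real.sinh x ^ (n - 1) := pow_pos hs _
      have h2 : 0 < (-u' x) ^ (p - 1) := Real.rpow_pos_of_pos (hv x hx) _
      have h3 : 0 < u x := hupos x hx.le
      have h4 : 0 < ((n:ℝ) - p) / p := div_pos hnp hp0
      have : 0 < ((n:ℝ) - p) / p * (Real.sinh x * (Real.sinh x ^ (n - 1) * ((-u' x) ^ (p - 1) * u x))) := by
        positivity
      linarith
  have hP0 : Filter.Tendsto P (nhdsWithin 0 (Set.Ioi (0:ℝ))) (nhds 0) := by
    have hu'tend : Filter.Tendsto (fun t => -u' t) (nhdsWithin 0 (Set.Ioi (0:ℝ))) (nhds 0) := by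
      have h := (hu'cont 0 Set.self_mem_Ici).tendsto
      rw [hu'0] at h
      have h2 := (h.mono_left (nhdsWithin_mono 0 Set.Ioi_subset_Ici_self)).neg
      simpa using h2
    have hutend : Filter.Tendsto u (nhdsWithin 0 (Set.Ioi (0:ℝ))) (nhds (u 0)) :=
      (hderiv0.continuousWithinAt.tendsto).mono_left (nhdsWithin_mono 0 Set.Ioi_subset_Ici_self)
    have hrp : ∀ q : ℝ, 0 ≤ q → q ≠ 0 → Filter.Tendsto (fun t => (-u' t) ^ q)
        (nhdsWithin 0 (Set.Ioi (0:ℝ))) (nhds 0) := by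
      intro q hq hq'
      have h := ((Real.continuousAt_rpow_const 0 q (Or.inr hq)).tendsto).comp hu'tend
      rw [Real.zero_rpow hq'] at h
      exact h
    have t2 := hrp p hp0.le hp0.ne'
    have t4 := hrp (p - 1) hpm1.le hpm1.ne'
    have t1 : Filter.Tendsto (fun t => Real.sinh t ^ n) (nhdsWithin 0 (Set.Ioi (0:ℝ))) (nhds 0) := by
      have h := ((Real.continuous_sinh.pow n).tendsto 0).mono_left (nhdsWithin_le_nhds (s := Set.Ioi (0:ℝ)))
      simp only [Pi.pow_apply, Real.sinh_zero, zero_pow (by omega : n ≠ 0)] at h; exact h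
    have t6 : Filter.Tendsto (fun t => Real.sinh t ^ (n - 1)) (nhdsWithin 0 (Set.Ioi (0:ℝ)))
        (nhds 0) := by
      have h := ((Real.continuous_sinh.pow (n - 1)).tendsto 0).mono_left (nhdsWithin_le_nhds (s := Set.Ioi (0:ℝ)))
      simp only [Pi.pow_apply, Real.sinh_zero, zero_pow (by omega : n - 1 ≠ 0)] at h; exact h
    have t5 : Filter.Tendsto Real.cosh (nhdsWithin 0 (Set.Ioi (0:ℝ))) (nhds 1) := by
      have h := (Real.continuous_cosh.tendsto 0).mono_left (nhdsWithin_le_nhds (s := Set.Ioi (0:ℝ)))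
      simpa using h
    have t3 : Filter.Tendsto (fun t => u t ^ pst) (nhdsWithin 0 (Set.Ioi (0:ℝ)))
        (nhds (u 0 ^ pst)) :=
      ((Real.continuousAt_rpow_const (u 0) pst (Or.inl (hupos 0 le_rfl).ne')).tendsto).comp hutend
    have hbig := (((t1.mul t2).const_mul ((p - 1) / p)).add ((t1.mul t3).div_const pst)).add
      ((t5.mul ((t6.mul (t4.mul hutend)).neg)).const_mul (((n:ℝ) - p) / p))
    have heq : (fun t => (p - 1) / p * (Real.sinh t ^ n * (-u' t) ^ p) +
        Real.sinh t ^ n * u t ^ pst / pst +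
        ((n:ℝ) - p) / p * (Real.cosh t * (-(Real.sinh t ^ (n - 1) * ((-u' t) ^ (p - 1) * u t)))))
        =ᶠ[nhdsWithin 0 (Set.Ioi (0:ℝ))] P := by
      filter_upwards [self_mem_nhdsWithin] with x hx
      exact (hPalt x hx).symm
    have hfin := hbig.congr' heq
    simpa using hfin
  have hPinf : Filter.Tendsto P Filter.atTop (nhds 0) := by
    have hCp := Real.rpow_pos_of_pos hC p
    have hCp1 := Real.rpow_pos_of_pos hC (p - 1)
    have hCpst := Real.rpow_pos_of_pos hC pst
    set K : ℝ := (p - 1) / p * (C ^ p) + C ^ pst / pst + ((n:ℝ) - p) / p * (C ^ (p - 1) * C)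
      with hKdef
    have hc1 : (0:ℝ) ≤ (p - 1) / p := by positivity
    have hc3 : (0:ℝ) ≤ ((n:ℝ) - p) / p := le_of_lt (div_pos hnp hp0)
    have hneg : (n:ℝ) - α * p < 0 := by
      have h : ((n:ℝ) - α * p) * (p - 1) = p - (n:ℝ) := by rw [hαdef]; field_simp; ring
      nlinarith
    have hbound : ∀ t : ℝ, 1 ≤ t → |P t| ≤ K * Real.exp (((n:ℝ) - α * p) * t) := by
      intro t ht1
      have ht : (0:ℝ) < t := by linarith
      obtain ⟨⟨hub1, hub2⟩, hvb1, hvb2⟩ := hdecay t ht1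
      have hs : 0 < Real.sinh t := Real.sinh_pos_iff.2 ht
      have hvt : 0 < -u' t := hv t ht
      have hu0 : 0 < u t := hupos t ht.le
      have hse : Real.sinh t ≤ Real.exp t := by
        rw [Real.sinh_eq]
        have h1 := Real.exp_pos (-t)
        have h2 := Real.exp_pos t
        linarith
      have hce : Real.cosh t ≤ Real.exp t := by
        rw [Real.cosh_eq]
        have h2 : Real.exp (-t) ≤ Real.exp t := Real.exp_le_exp.2 (by linarith)
        linarith
      have hen : ∀ m : ℕ, Real.exp t ^ m = Real.exp ((m:ℝ) * t) := by
        intro m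
        rw [← Real.rpow_natCast (Real.exp t) m, ← Real.exp_mul, mul_comm]
      have hsn : Real.sinh t ^ n ≤ Real.exp ((n:ℝ) * t) := by
        calc Real.sinh t ^ n ≤ Real.exp t ^ n := pow_le_pow_left₀ hs.le hse n
          _ = Real.exp ((n:ℝ) * t) := hen n
      have hsn1 : Real.sinh t ^ (n - 1) ≤ Real.exp (((n:ℝ) - 1) * t) := by
        calc Real.sinh t ^ (n - 1) ≤ Real.exp t ^ (n - 1) := pow_le_pow_left₀ hs.le hse _
          _ = Real.exp (((n:ℝ) - 1) * t) := by rw [hen (n - 1), hn1cast]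
      have hvp : (-u' t) ^ p ≤ C ^ p * Real.exp (-(α * p) * t) := by
        calc (-u' t) ^ p ≤ (C * Real.exp (-α * t)) ^ p := Real.rpow_le_rpow hvt.le hvb2 hp0.le
          _ = C ^ p * Real.exp (-(α * p) * t) := by
              rw [Real.mul_rpow hC.le (Real.exp_pos _).le, ← Real.exp_mul,
                show -α * t * p = -(α * p) * t by ring]
      have hvp1 : (-u' t) ^ (p - 1) ≤ C ^ (p - 1) * Real.exp (-(α * (p - 1)) * t) := by
        calc (-u' t) ^ (p - 1) ≤ (C * Real.exp (-α * t)) ^ (p - 1) :=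
              Real.rpow_le_rpow hvt.le hvb2 hpm1.le
          _ = C ^ (p - 1) * Real.exp (-(α * (p - 1)) * t) := by
              rw [Real.mul_rpow hC.le (Real.exp_pos _).le, ← Real.exp_mul,
                show -α * t * (p - 1) = -(α * (p - 1)) * t by ring]
      have hupb : u t ^ pst ≤ C ^ pst * Real.exp (-(α * pst) * t) := by
        calc u t ^ pst ≤ (C * Real.exp (-α * t)) ^ pst :=
              Real.rpow_le_rpow hu0.le hub2 hpstpos.le
          _ = C ^ pst * Real.exp (-(α * pst) * t) := by
              rw [Real.mul_rpow hC.le (Real.exp_pos _).le, ← Real.exp_mul,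
                show -α * t * pst = -(α * pst) * t by ring]
      have hmulexp : ∀ a b K' : ℝ, Real.exp a * (K' * Real.exp b) = K' * Real.exp (a + b) := by
        intro a b K'
        rw [Real.exp_add]
        ring
      have hT1 : Real.sinh t ^ n * (-u' t) ^ p ≤ C ^ p * Real.exp (((n:ℝ) - α * p) * t) := by
        calc Real.sinh t ^ n * (-u' t) ^ p
            ≤ Real.exp ((n:ℝ) * t) * (C ^ p * Real.exp (-(α * p) * t)) :=
              mul_le_mul hsn hvp (Real.rpow_nonneg hvt.le p) (Real.exp_pos _).le
          _ = C ^ p * Real.exp (((n:ℝ) - α * p) * t) := by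
              rw [hmulexp, show (n:ℝ) * t + -(α * p) * t = ((n:ℝ) - α * p) * t by ring]
      have hT2 : Real.sinh t ^ n * u t ^ pst ≤ C ^ pst * Real.exp (((n:ℝ) - α * p) * t) := by
        calc Real.sinh t ^ n * u t ^ pst
            ≤ Real.exp ((n:ℝ) * t) * (C ^ pst * Real.exp (-(α * pst) * t)) :=
              mul_le_mul hsn hupb (Real.rpow_nonneg hu0.le pst) (Real.exp_pos _).le
          _ = C ^ pst * Real.exp (((n:ℝ) - α * pst) * t) := by
              rw [hmulexp, show (n:ℝ) * t + -(α * pst) * t = ((n:ℝ) - α * pst) * t by ring]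
          _ ≤ C ^ pst * Real.exp (((n:ℝ) - α * p) * t) := by
              apply mul_le_mul_of_nonneg_left _ hCpst.le
              apply Real.exp_le_exp.2
              have hq : (0:ℝ) ≤ α * (pst - p) * t :=
                mul_nonneg (mul_pos hα (sub_pos.2 hpstp)).le ht.le
              nlinarith [hq]
      have hexp4 : ∀ a b d e : ℝ, Real.exp a * (Real.exp b * ((C ^ (p - 1) * Real.exp d) *
          (C * Real.exp e))) = C ^ (p - 1) * C * Real.exp (a + b + d + e) := by
        intro a b d e
        rw [Real.exp_add, Real.exp_add, Real.exp_add]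
        ring
      have hT3 : Real.cosh t * (Real.sinh t ^ (n - 1) * ((-u' t) ^ (p - 1) * u t)) ≤
          C ^ (p - 1) * C * Real.exp (((n:ℝ) - α * p) * t) := by
        have hb1 : (-u' t) ^ (p - 1) * u t ≤
            (C ^ (p - 1) * Real.exp (-(α * (p - 1)) * t)) * (C * Real.exp (-α * t)) :=
          mul_le_mul hvp1 hub2 hu0.le (by positivity)
        have hb2 : Real.sinh t ^ (n - 1) * ((-u' t) ^ (p - 1) * u t) ≤
            Real.exp (((n:ℝ) - 1) * t) *
              ((C ^ (p - 1) * Real.exp (-(α * (p - 1)) * t)) * (C * Real.exp (-α * t))) :=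
          mul_le_mul hsn1 hb1 (mul_nonneg (Real.rpow_nonneg hvt.le _) hu0.le) (by positivity)
        calc Real.cosh t * (Real.sinh t ^ (n - 1) * ((-u' t) ^ (p - 1) * u t))
            ≤ Real.exp t * (Real.exp (((n:ℝ) - 1) * t) *
              ((C ^ (p - 1) * Real.exp (-(α * (p - 1)) * t)) * (C * Real.exp (-α * t)))) := by
              apply mul_le_mul hce hb2 _ (Real.exp_pos _).le
              exact mul_nonneg (pow_nonneg hs.le _)
                (mul_nonneg (Real.rpow_nonneg hvt.le _) hu0.le)
          _ = C ^ (p - 1) * C * Real.exp (((n:ℝ) - α * p) * t) := by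
              rw [hexp4, show t + ((n:ℝ) - 1) * t + -(α * (p - 1)) * t + -α * t =
                ((n:ℝ) - α * p) * t by ring]
      have hsnn : (0:ℝ) ≤ Real.sinh t ^ n := pow_nonneg hs.le n
      have hT1n : (0:ℝ) ≤ Real.sinh t ^ n * (-u' t) ^ p :=
        mul_nonneg hsnn (Real.rpow_nonneg hvt.le p)
      have hT2n : (0:ℝ) ≤ Real.sinh t ^ n * u t ^ pst :=
        mul_nonneg hsnn (Real.rpow_nonneg hu0.le pst)
      have hT3n : (0:ℝ) ≤ Real.cosh t * (Real.sinh t ^ (n - 1) * ((-u' t) ^ (p - 1) * u t)) := by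
        apply mul_nonneg (Real.cosh_pos t).le
        exact mul_nonneg (pow_nonneg hs.le _)
          (mul_nonneg (Real.rpow_nonneg hvt.le _) hu0.le)
      have hE : (0:ℝ) < Real.exp (((n:ℝ) - α * p) * t) := Real.exp_pos _
      have e1 : (p - 1) / p * (Real.sinh t ^ n * (-u' t) ^ p) ≤
          (p - 1) / p * (C ^ p * Real.exp (((n:ℝ) - α * p) * t)) :=
        mul_le_mul_of_nonneg_left hT1 hc1
      have e1n : (0:ℝ) ≤ (p - 1) / p * (Real.sinh t ^ n * (-u' t) ^ p) :=
        mul_nonneg hc1 hT1n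
      have e2 : Real.sinh t ^ n * u t ^ pst / pst ≤
          C ^ pst / pst * Real.exp (((n:ℝ) - α * p) * t) := by
        rw [div_mul_eq_mul_div]
        exact (div_le_div_iff_of_pos_right hpstpos).2 hT2
      have e2n : (0:ℝ) ≤ Real.sinh t ^ n * u t ^ pst / pst := div_nonneg hT2n hpstpos.le
      have e3 : ((n:ℝ) - p) / p * (Real.cosh t * (Real.sinh t ^ (n - 1) *
          ((-u' t) ^ (p - 1) * u t))) ≤
          ((n:ℝ) - p) / p * (C ^ (p - 1) * C * Real.exp (((n:ℝ) - α * p) * t)) :=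
        mul_le_mul_of_nonneg_left hT3 hc3
      have e3n : (0:ℝ) ≤ ((n:ℝ) - p) / p * (Real.cosh t * (Real.sinh t ^ (n - 1) *
          ((-u' t) ^ (p - 1) * u t))) := mul_nonneg hc3 hT3n
      have e1p : (0:ℝ) ≤ (p - 1) / p * (C ^ p * Real.exp (((n:ℝ) - α * p) * t)) := by positivity
      have e2p : (0:ℝ) ≤ C ^ pst / pst * Real.exp (((n:ℝ) - α * p) * t) := by positivity
      have e3p : (0:ℝ) ≤ ((n:ℝ) - p) / p * (C ^ (p - 1) * C * Real.exp (((n:ℝ) - α * p) * t)) :=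
        mul_nonneg hc3 (by positivity)
      rw [hPalt t ht, hKdef, abs_le]
      constructor
      · linarith [e1, e2, e3n, e1p, e2p, e3p]
      · linarith [e1n, e2n, e3, e1p, e2p, e3p]
    have hgt : Filter.Tendsto (fun t : ℝ => K * Real.exp (((n:ℝ) - α * p) * t))
        Filter.atTop (nhds 0) := by
      have h0 : Filter.Tendsto (fun t : ℝ => -((n:ℝ) - α * p) * t) Filter.atTop Filter.atTop :=
        Filter.Tendsto.const_mul_atTop (by linarith) Filter.tendsto_id
      have h1 := Filter.tendsto_neg_atTop_atBot.comp h0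
      have h2 := Real.tendsto_exp_atBot.comp h1
      have h3 := h2.const_mul K
      rw [mul_zero] at h3
      apply h3.congr
      intro x
      simp only [Function.comp]
      rw [neg_mul, neg_neg]
    apply squeeze_zero_norm' _ hgt
    filter_upwards [Filter.eventually_ge_atTop (1:ℝ)] with t ht1
    rw [Real.norm_eq_abs]
    exact hbound t ht1
  have h1mem : (1:ℝ) ∈ Set.Ioi (0:ℝ) := by norm_num
  have h2mem : (2:ℝ) ∈ Set.Ioi (0:ℝ) := by norm_num
  have h21 : P 2 < P 1 := hanti h1mem h2mem (by norm_num)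
  have h01 : P 1 ≤ 0 := by
    refine ge_of_tendsto hP0 ?_
    filter_upwards [Ioo_mem_nhdsGT_of_mem (by norm_num : (0:ℝ) ∈ Set.Ico (0:ℝ) 1)] with x hx
    exact (hanti (Set.mem_Ioi.2 hx.1) h1mem hx.2).le
  have h02 : (0:ℝ) ≤ P 2 := by
    refine le_of_tendsto hPinf ?_
    filter_upwards [Filter.eventually_ge_atTop (3:ℝ)] with x hx
    exact (hanti h2mem (Set.mem_Ioi.2 (by linarith)) (by linarith)).le
  linarith
end

section
/- Let n ≥ 2 be an integer, p real with 1 < p < n, and R > 0. Then there exists a constant C > 0 (depending only on n, p, R) such that for every C¹ function v : (0,∞) → ℝ with v(t) → 0 as t → ∞ and ∫_R^∞ |v′(s)|^p (sinh s)^(n−1) ds < ∞, and for every t ≥ R, |v(t)| ≤ C · e^(−((n−1)/p)·t) · ( ∫_t^∞ |v′(s)|^p (sinh s)^(n−1) ds )^(1/p). (This is the pointwise exponential decay bound for radial functions of finite hyperbolic p-energy: |u(x)| ≤ C_R ‖∇_g u‖_{L^p(ℍⁿ∖B_R)} e^(−((n−1)/p)·dist(O,x)).) -/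
open Real MeasureTheory

private lemma aux_memLp {r : ℝ} (hr : 0 < r) {f : ℝ → ℝ} {μ : Measure ℝ}
    (hfm : AEStronglyMeasurable f μ) (hint : Integrable (fun x => |f x| ^ r) μ) :
    MemLp f (ENNReal.ofReal r) μ := by
  have h0 : ENNReal.ofReal r ≠ 0 := by
    simp [ENNReal.ofReal_eq_zero, not_le, hr]
  have htop : ENNReal.ofReal r ≠ ⊤ := ENNReal.ofReal_ne_top
  have h1 : MemLp (fun x => ‖f x‖ ^ (ENNReal.ofReal r).toReal) 1 μ := by
    rw [memLp_one_iff_integrable]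
    simpa [ENNReal.toReal_ofReal hr.le, Real.norm_eq_abs] using hint
  have := (memLp_norm_rpow_iff (p := ENNReal.ofReal r) (q := ENNReal.ofReal r) hfm h0 htop)
  rw [ENNReal.div_self h0 htop] at this
  exact this.mp h1

theorem stmt19 (n : ℕ) (hn : 2 ≤ n) (p : ℝ) (hp1 : 1 < p) (hpn : p < n)
    (R : ℝ) (hR : 0 < R) :
    ∃ C > (0 : ℝ), ∀ v : ℝ → ℝ, ContDiffOn ℝ 1 v (Set.Ioi 0) →
      Filter.Tendsto v Filter.atTop (nhds 0) →
      IntegrableOn (fun s : ℝ => |deriv v s| ^ p * Real.sinh s ^ (n - 1)) (Set.Ioi R) →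
      ∀ t : ℝ, R ≤ t →
        |v t| ≤ C * Real.exp (-(((n : ℝ) - 1) / p) * t) *
          (∫ s in Set.Ioi t, |deriv v s| ^ p * Real.sinh s ^ (n - 1)) ^ (1 / p) := by
  have hp0 : (0:ℝ) < p := by linarith
  have hp1' : (0:ℝ) < p - 1 := by linarith
  set a : ℝ := (n:ℝ) - 1 with ha_def
  have hn2 : (2:ℝ) ≤ (n:ℝ) := by exact_mod_cast hn
  have ha : 0 < a := by rw [ha_def]; linarith
  set q : ℝ := p / (p - 1) with hq_def
  have hpq : p.HolderConjugate q := Real.HolderConjugate.conjExponent hp1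
  have hq0 : 0 < q := hpq.symm.pos
  set b : ℝ := a / (p - 1) with hb_def
  have hb : 0 < b := div_pos ha hp1'
  set c : ℝ := (1 - Real.exp (-(2*R))) / 2 with hc_def
  have hc : 0 < c := by
    have : Real.exp (-(2*R)) < 1 := Real.exp_lt_one_iff.mpr (by linarith)
    rw [hc_def]; linarith
  set ee : ℝ := a / p with hee_def
  set C : ℝ := (c ^ (-b) / b) ^ (1/q) with hC_def
  have hC : 0 < C := Real.rpow_pos_of_pos (div_pos (Real.rpow_pos_of_pos hc _) hb) _
  refine ⟨C, hC, ?_⟩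
  intro v hv hv0 hint t ht
  have ht0 : 0 < t := lt_of_lt_of_le hR ht
  have hsinh_lb : ∀ s, t ≤ s → c * Real.exp s ≤ Real.sinh s := by
    intro s hs
    have hs' : R ≤ s := le_trans ht hs
    have h1 : Real.exp (-s) ≤ Real.exp (-(2*R)) * Real.exp s := by
      rw [← Real.exp_add]
      exact Real.exp_le_exp.2 (by linarith)
    rw [Real.sinh_eq, hc_def]
    nlinarith [Real.exp_pos s]
  have hsinh_pos : ∀ s : ℝ, s ∈ Set.Ioi t → 0 < Real.sinh s := fun s hs =>
    Real.sinh_pos_iff.2 (lt_trans ht0 hs)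
  set μ : Measure ℝ := volume.restrict (Set.Ioi t) with hμ_def
  -- continuity of deriv v
  have hdc : ContinuousOn (deriv v) (Set.Ioi 0) :=
    hv.continuousOn_deriv_of_isOpen isOpen_Ioi le_rfl
  have hsub : Set.Ioi t ⊆ Set.Ioi (0:ℝ) := Set.Ioi_subset_Ioi ht0.le
  have hmeasd : AEStronglyMeasurable (deriv v) μ :=
    (hdc.mono hsub).aestronglyMeasurable measurableSet_Ioi
  have hderiv : ∀ x ∈ Set.Ici t, HasDerivAt v (deriv v x) x := by
    intro x hx
    have hx0 : x ∈ Set.Ioi (0:ℝ) := lt_of_lt_of_le ht0 hx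
    exact ((hv.differentiableOn one_ne_zero x hx0).differentiableAt
      (isOpen_Ioi.mem_nhds hx0)).hasDerivAt
  set f : ℝ → ℝ := fun s => |deriv v s| * Real.sinh s ^ ee with hf_def
  set g : ℝ → ℝ := fun s => Real.sinh s ^ (-ee) with hg_def
  have hfc : ContinuousOn f (Set.Ioi t) := by
    apply ((hdc.mono hsub).abs).mul
    exact Real.continuous_sinh.continuousOn.rpow_const
      (fun s hs => Or.inl (ne_of_gt (hsinh_pos s hs)))
  have hgc : ContinuousOn g (Set.Ioi t) :=
    Real.continuous_sinh.continuousOn.rpow_const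
      (fun s hs => Or.inl (ne_of_gt (hsinh_pos s hs)))
  have hfm : AEStronglyMeasurable f μ := hfc.aestronglyMeasurable measurableSet_Ioi
  have hgm : AEStronglyMeasurable g μ := hgc.aestronglyMeasurable measurableSet_Ioi
  have hf_nonneg : ∀ s ∈ Set.Ioi t, 0 ≤ f s := fun s _ =>
    mul_nonneg (abs_nonneg _) (Real.rpow_nonneg (Real.sinh_nonneg_iff.2 (by
      exact le_of_lt (lt_trans ht0 (by assumption)))) _)
  have hg_nonneg : ∀ s ∈ Set.Ioi t, 0 ≤ g s := fun s hs =>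
    Real.rpow_nonneg (hsinh_pos s hs).le _
  -- key pointwise identities
  have hcast : ((n - 1 : ℕ) : ℝ) = a := by
    rw [ha_def]; push_cast [Nat.cast_sub (by omega : 1 ≤ n)]; ring
  have hfp : ∀ s ∈ Set.Ioi t, f s ^ p = |deriv v s| ^ p * Real.sinh s ^ (n - 1) := by
    intro s hs
    have hsp := hsinh_pos s hs
    rw [hf_def]
    rw [Real.mul_rpow (abs_nonneg _) (Real.rpow_nonneg hsp.le _),
      ← Real.rpow_natCast (Real.sinh s) (n-1), hcast,
      ← Real.rpow_mul hsp.le]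
    congr 2
    rw [hee_def]; field_simp
  have hgq : ∀ s ∈ Set.Ioi t, g s ^ q = Real.sinh s ^ (-b) := by
    intro s hs
    have hsp := hsinh_pos s hs
    rw [hg_def, ← Real.rpow_mul hsp.le]
    congr 1
    rw [hee_def, hq_def, hb_def]; field_simp
  have hgq_le : ∀ s ∈ Set.Ioi t, g s ^ q ≤ c ^ (-b) * Real.exp (-b * s) := by
    intro s hs
    rw [hgq s hs]
    have h1 : Real.sinh s ^ (-b) ≤ (c * Real.exp s) ^ (-b) :=
      Real.rpow_le_rpow_of_nonpos (by positivity) (hsinh_lb s (le_of_lt hs))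
        (by linarith)
    refine h1.trans_eq ?_
    rw [Real.mul_rpow hc.le (Real.exp_pos s).le]
    congr 1
    rw [← Real.exp_mul]
    ring_nf
  -- integrability of f^p
  have hf_int : Integrable (fun s => |f s| ^ p) μ := by
    have h0 : IntegrableOn (fun s : ℝ => |deriv v s| ^ p * Real.sinh s ^ (n - 1))
        (Set.Ioi t) := hint.mono_set (Set.Ioi_subset_Ioi ht)
    refine h0.congr ?_
    filter_upwards [MeasureTheory.ae_restrict_mem measurableSet_Ioi] with s hs
    rw [abs_of_nonneg (hf_nonneg s hs), hfp s hs]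
  -- integrability of g^q
  have hM_int : Integrable (fun s => c ^ (-b) * Real.exp (-b * s)) μ :=
    (exp_neg_integrableOn_Ioi t hb).const_mul _
  have hg_int : Integrable (fun s => |g s| ^ q) μ := by
    refine Integrable.mono' hM_int ?_ ?_
    · exact ((hgc.abs).rpow_const (fun s _ => Or.inr hq0.le)).aestronglyMeasurable
        measurableSet_Ioi
    · filter_upwards [MeasureTheory.ae_restrict_mem measurableSet_Ioi] with s hs
      rw [Real.norm_eq_abs, abs_of_nonneg (Real.rpow_nonneg (abs_nonneg _) _),
        abs_of_nonneg (hg_nonneg s hs)]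
      exact hgq_le s hs
  have hfmem : MemLp f (ENNReal.ofReal p) μ := aux_memLp hp0 hfm hf_int
  have hgmem : MemLp g (ENNReal.ofReal q) μ := aux_memLp hq0 hgm hg_int
  -- integrability of deriv v on Ioi t
  have hone : (1:ENNReal) / 1 = 1 / ENNReal.ofReal q + 1 / ENNReal.ofReal p := by
    rw [ENNReal.div_self one_ne_zero ENNReal.one_ne_top, one_div, one_div,
      ← ENNReal.ofReal_inv_of_pos hq0, ← ENNReal.ofReal_inv_of_pos hp0,
      ← ENNReal.ofReal_add (by positivity) (by positivity)]
    have hqp : q⁻¹ + p⁻¹ = 1 := by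
      have := hpq.inv_add_inv_eq_one; linarith
    rw [hqp]
    simp
  have hgf : ∀ s ∈ Set.Ioi t, g s * f s = |deriv v s| := by
    intro s hs
    have hsp := hsinh_pos s hs
    rw [hf_def, hg_def]
    have h1 : Real.sinh s ^ (-ee) * Real.sinh s ^ ee = 1 := by
      rw [← Real.rpow_add hsp]; simp
    calc Real.sinh s ^ (-ee) * (|deriv v s| * Real.sinh s ^ ee)
        = |deriv v s| * (Real.sinh s ^ (-ee) * Real.sinh s ^ ee) := by ring
      _ = |deriv v s| := by rw [h1, mul_one]
  have habs : MemLp (fun s => |deriv v s|) 1 μ := by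
    refine (hfmem.smul hgmem (r := 1)
      (hpqr := ⟨by simpa only [one_div, inv_one] using hone.symm⟩)).ae_eq ?_
    filter_upwards [MeasureTheory.ae_restrict_mem measurableSet_Ioi] with s hs
    exact hgf s hs
  have hI1 : Integrable (fun s => |deriv v s|) μ := memLp_one_iff_integrable.mp habs
  have hId : IntegrableOn (deriv v) (Set.Ioi t) := by
    refine (integrable_norm_iff hmeasd).mp ?_
    simpa [Real.norm_eq_abs] using hI1
  -- FTC
  have hFTC : ∫ s in Set.Ioi t, deriv v s = 0 - v t :=
    MeasureTheory.integral_Ioi_of_hasDerivAt_of_tendsto' hderiv hId hv0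
  -- the exponential integral
  have hexp : ∫ s in Set.Ioi t, Real.exp (-b * s) = Real.exp (-b * t) / b := by
    have hd : ∀ x ∈ Set.Ici t, HasDerivAt (fun s => -Real.exp (-b*s) / b)
        (Real.exp (-b*x)) x := by
      intro x _
      have h1 : HasDerivAt (fun s : ℝ => -b * s) (-b) x := by
        simpa using (hasDerivAt_id x).const_mul (-b)
      have h2 := (h1.exp.neg.div_const b)
      have h3 : -(Real.exp (-b * x) * -b) / b = Real.exp (-b * x) := by field_simp
      rw [h3] at h2
      exact h2
    have htend : Filter.Tendsto (fun s => -Real.exp (-b*s) / b) Filter.atTop (nhds 0) := by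
      have h1 : Filter.Tendsto (fun s : ℝ => b * s) Filter.atTop Filter.atTop :=
        Filter.Tendsto.const_mul_atTop hb Filter.tendsto_id
      have h2 : Filter.Tendsto (fun s : ℝ => Real.exp (-(b*s))) Filter.atTop (nhds 0) :=
        Real.tendsto_exp_neg_atTop_nhds_zero.comp h1
      have h3 := (h2.neg.div_const b)
      simpa [neg_mul] using h3
    have := MeasureTheory.integral_Ioi_of_hasDerivAt_of_tendsto' hd
      (exp_neg_integrableOn_Ioi t hb) htend
    rw [this]; ring
  -- main estimate
  set E : ℝ := ∫ s in Set.Ioi t, |deriv v s| ^ p * Real.sinh s ^ (n - 1) with hE_def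
  have hE0 : 0 ≤ E := setIntegral_nonneg measurableSet_Ioi (fun s hs => mul_nonneg (Real.rpow_nonneg (abs_nonneg _) _)
    (pow_nonneg (hsinh_pos s hs).le _))
  have hEeq : ∫ s in Set.Ioi t, f s ^ p = E := by
    rw [hE_def]
    exact setIntegral_congr_fun measurableSet_Ioi (fun s hs => hfp s hs)
  set G : ℝ := ∫ s in Set.Ioi t, g s ^ q with hG_def
  have hG0 : 0 ≤ G := setIntegral_nonneg measurableSet_Ioi (fun s hs =>
    Real.rpow_nonneg (hg_nonneg s hs) _)
  have hgq_int : Integrable (fun s => g s ^ q) μ := by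
    refine hg_int.congr ?_
    filter_upwards [MeasureTheory.ae_restrict_mem measurableSet_Ioi] with s hs
    rw [abs_of_nonneg (hg_nonneg s hs)]
  have hGle : G ≤ c ^ (-b) * (Real.exp (-b * t) / b) := by
    have h1 : G ≤ ∫ s in Set.Ioi t, c ^ (-b) * Real.exp (-b * s) := by
      rw [hG_def]
      exact setIntegral_mono_on hgq_int hM_int measurableSet_Ioi
        (fun s hs => hgq_le s hs)
    refine h1.trans_eq ?_
    rw [MeasureTheory.integral_const_mul, hexp]
  -- Hölder
  have hHolder : |v t| ≤ E ^ (1/p) * G ^ (1/q) := by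
    have h1 : |v t| = ‖∫ s in Set.Ioi t, deriv v s‖ := by
      rw [hFTC]; simp [Real.norm_eq_abs, abs_neg]
    have h2 : (∫ s in Set.Ioi t, ‖deriv v s‖) = ∫ s in Set.Ioi t, f s * g s := by
      refine setIntegral_congr_fun measurableSet_Ioi (fun s hs => ?_)
      rw [Real.norm_eq_abs, ← hgf s hs]; ring
    have h3 := MeasureTheory.integral_mul_le_Lp_mul_Lq_of_nonneg hpq
      (μ := μ) (f := f) (g := g)
      ((MeasureTheory.ae_restrict_mem measurableSet_Ioi).mono fun s hs => hf_nonneg s hs)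
      ((MeasureTheory.ae_restrict_mem measurableSet_Ioi).mono fun s hs => hg_nonneg s hs)
      hfmem hgmem
    calc |v t| = ‖∫ s in Set.Ioi t, deriv v s‖ := h1
      _ ≤ ∫ s in Set.Ioi t, ‖deriv v s‖ := norm_integral_le_integral_norm _
      _ = ∫ s in Set.Ioi t, f s * g s := h2
      _ ≤ (∫ s in Set.Ioi t, f s ^ p) ^ (1/p) * (∫ s in Set.Ioi t, g s ^ q) ^ (1/q) := h3
      _ = E ^ (1/p) * G ^ (1/q) := by rw [hEeq, ← hG_def]
  -- final assembly
  have hGq : G ^ (1/q) ≤ C * Real.exp (-(a/p) * t) := by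
    have h1 : G ^ (1/q) ≤ (c ^ (-b) * (Real.exp (-b * t) / b)) ^ (1/q) :=
      Real.rpow_le_rpow hG0 hGle (by positivity)
    refine h1.trans_eq ?_
    have h2 : c ^ (-b) * (Real.exp (-b * t) / b) = (c ^ (-b) / b) * Real.exp (-b * t) := by
      ring
    rw [h2, Real.mul_rpow (by positivity) (Real.exp_pos _).le, ← Real.exp_mul, hC_def]
    congr 1
    rw [hq_def, hb_def]
    field_simp
  calc |v t| ≤ E ^ (1/p) * G ^ (1/q) := hHolder
    _ ≤ E ^ (1/p) * (C * Real.exp (-(a/p) * t)) :=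
      mul_le_mul_of_nonneg_left hGq (Real.rpow_nonneg hE0 _)
    _ = C * Real.exp (-(a/p) * t) * E ^ (1/p) := by ring
end
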